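/- arXiv:math/0511739 — 7 statements merged into one kernel-verified Lean document; each statement's English description precedes it below -/
import Mathlib

section
/- For every 0 < β ≤ 1, every δ with β ≤ δ ≤ 1, and all real numbers a, b ≥ 0, one has 0 ≤ (a+b)^{1+β} − a^{1+β} − b^{1+β} ≤ (1+β)·a^δ·b^{1+β−δ}. -/
/-!
Fix `b`. The function `x ↦ (1+β) x b^β - ((x+b)^{1+β} - x^{1+β} - b^{1+β})` vanishes at `0` and
has derivative `(1+β) (b^β + x^β - (x+b)^β) ≥ 0` by subadditivity of `t ↦ t^β`, so the defect
`(a+b)^{1+β} - a^{1+β} - b^{1+β}` is at most `X = (1+β) a b^β`, and symmetrically at most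
`Y = (1+β) a^β b`. Writing `δ = s β + t` with `s + t = 1`, the claimed bound is `Y^s X^t`, which
dominates `min X Y`. Nonnegativity of the defect is superadditivity of `t ↦ t^{1+β}`.
-/

open Real Set

lemma add_rpow_sub_rpow_sub_rpow_le {β a b : ℝ} (hβ0 : 0 ≤ β) (hβ1 : β ≤ 1) (ha : 0 ≤ a)
    (hb : 0 ≤ b) :
    (a + b) ^ (1 + β) - a ^ (1 + β) - b ^ (1 + β) ≤ (1 + β) * a * b ^ β := by
  set g : ℝ → ℝ := fun x ↦ (1 + β) * x * b ^ β + x ^ (1 + β) + b ^ (1 + β) - (x + b) ^ (1 + β)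
  have hp : (1 : ℝ) ≤ 1 + β := by linarith
  have hg' : ∀ x, HasDerivAt g ((1 + β) * (b ^ β + x ^ β - (x + b) ^ β)) x := by
    intro x
    have hx := hasDerivAt_rpow_const (x := x) (Or.inr hp)
    have hxb := (hasDerivAt_rpow_const (x := x + b) (Or.inr hp)).comp x
      ((hasDerivAt_id x).add_const b)
    refine (((((hasDerivAt_id x).const_mul (1 + β)).mul_const (b ^ β)).add hx).add_const
      (b ^ (1 + β))).sub hxb |>.congr_deriv ?_
    simp only [add_sub_cancel_left]
    ring
  have hmono : MonotoneOn g (Ici 0) := by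
    refine monotoneOn_of_hasDerivWithinAt_nonneg (convex_Ici 0)
      (fun x _ ↦ (hg' x).continuousAt.continuousWithinAt)
      (fun x _ ↦ (hg' x).hasDerivWithinAt) fun x hx ↦ ?_
    rw [interior_Ici, mem_Ioi] at hx
    have := rpow_add_le_add_rpow hx.le hb hβ0 hβ1
    nlinarith
  have := hmono self_mem_Ici ha ha
  simp only [g, zero_add, mul_zero, zero_mul, zero_rpow (by linarith : (1 : ℝ) + β ≠ 0)] at this
  linarith

lemma le_rpow_mul_rpow_of_le_of_le {F X Y s t : ℝ} (hF : 0 ≤ F) (hX : F ≤ X) (hY : F ≤ Y)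
    (hs : 0 ≤ s) (ht : 0 ≤ t) (hst : s + t = 1) : F ≤ X ^ s * Y ^ t :=
  calc F = F ^ s * F ^ t := by rw [← rpow_add' hF (by simp [hst]), hst, rpow_one]
    _ ≤ X ^ s * Y ^ t := mul_le_mul (rpow_le_rpow hF hX hs) (rpow_le_rpow hF hY ht)
      (rpow_nonneg hF t) (rpow_nonneg (hF.trans hX) s)

/-- Elementary inequality (3.4): for `0 < β ≤ 1`, `β ≤ δ ≤ 1` and `a, b ≥ 0`,
`0 ≤ (a+b)^{1+β} − a^{1+β} − b^{1+β} ≤ (1+β) a^δ b^{1+β−δ}`. -/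
theorem stmt0 (β δ a b : ℝ) (hβ0 : 0 < β) (hβ1 : β ≤ 1) (hδl : β ≤ δ) (hδu : δ ≤ 1)
    (ha : 0 ≤ a) (hb : 0 ≤ b) :
    0 ≤ (a + b) ^ (1 + β) - a ^ (1 + β) - b ^ (1 + β) ∧
      (a + b) ^ (1 + β) - a ^ (1 + β) - b ^ (1 + β) ≤ (1 + β) * a ^ δ * b ^ (1 + β - δ) := by
  have hF : 0 ≤ (a + b) ^ (1 + β) - a ^ (1 + β) - b ^ (1 + β) := by
    linarith [add_rpow_le_rpow_add ha hb (by linarith : (1 : ℝ) ≤ 1 + β)]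
  refine ⟨hF, ?_⟩
  obtain ⟨s, t, hs, ht, hst, hδ⟩ : δ ∈ segment ℝ β 1 := segment_eq_Icc hβ1 ▸ ⟨hδl, hδu⟩
  simp only [smul_eq_mul, mul_one] at hδ
  have hX := add_rpow_sub_rpow_sub_rpow_le hβ0.le hβ1 hb ha
  rw [add_comm b] at hX
  have hY := add_rpow_sub_rpow_sub_rpow_le hβ0.le hβ1 ha hb
  calc _ ≤ ((1 + β) * a ^ β * b) ^ s * ((1 + β) * a * b ^ β) ^ t :=
        le_rpow_mul_rpow_of_le_of_le hF (by linarith) hY hs ht hst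
    _ = (1 + β) ^ (s + t) * a ^ (β * s + t) * b ^ (s + β * t) := by
      rw [mul_rpow (by positivity) hb, mul_rpow (by positivity) (rpow_nonneg ha β),
        mul_rpow (by positivity) (rpow_nonneg hb β), mul_rpow (by positivity) ha,
        ← rpow_mul ha, ← rpow_mul hb, rpow_add (by positivity),
        rpow_add' ha (by nlinarith), rpow_add' hb (by nlinarith)]
      ring
    _ = (1 + β) * a ^ δ * b ^ (1 + β - δ) := by
      rw [hst, rpow_one, show β * s + t = δ by linear_combination hδ,
        show s + β * t = 1 + β - δ by linear_combination (1 + β) * hst - hδ]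
end

section
/- For every 0 < β ≤ 1 and all real numbers a, b with 0 ≤ a ≤ b, one has (a+b)^{1+β} − a^{1+β} − b^{1+β} ≥ β·b^β·a. -/
/-- Elementary inequality (3.5): for `0 < β ≤ 1` and `0 ≤ a ≤ b`,
`(a+b)^{1+β} − a^{1+β} − b^{1+β} ≥ β b^β a`. -/
theorem stmt1 (β a b : ℝ) (hβ0 : 0 < β) (hβ1 : β ≤ 1) (ha : 0 ≤ a) (hab : a ≤ b) :
    (a + b) ^ (1 + β) - a ^ (1 + β) - b ^ (1 + β) ≥ β * b ^ β * a := by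
  have hb : 0 ≤ b := ha.trans hab
  rcases eq_or_lt_of_le hb with hb0 | hb0
  · subst hb0
    have hab0 : a = 0 := le_antisymm hab ha
    simp [hab0, Real.zero_rpow (by positivity : (1:ℝ) + β ≠ 0)]
  -- key: (a+b)^{1+β} ≥ b^{1+β} + (1+β) b^β a  (Bernoulli / tangent line)
  have hβ0' : (0:ℝ) < 1 + β := by linarith
  have key : b ^ (1 + β) + (1 + β) * b ^ β * a ≤ (a + b) ^ (1 + β) := by
    have hs : -1 ≤ a / b := by
      have : 0 ≤ a / b := by positivity
      linarith
    have hbern := one_add_mul_self_le_rpow_one_add hs (by linarith : (1:ℝ) ≤ 1 + β)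
    have h1 : (1 + a / b) ^ (1 + β) = (a + b) ^ (1 + β) / b ^ (1 + β) := by
      rw [← Real.div_rpow (by positivity) hb]
      congr 1
      field_simp
      ring
    have hbpow : 0 < b ^ (1 + β) := Real.rpow_pos_of_pos hb0 _
    have h2 : b ^ (1 + β) * (1 + (1 + β) * (a / b)) ≤ (a + b) ^ (1 + β) := by
      calc b ^ (1 + β) * (1 + (1 + β) * (a / b))
          ≤ b ^ (1 + β) * ((1 + a / b) ^ (1 + β)) := by
            exact mul_le_mul_of_nonneg_left hbern hbpow.le
        _ = (a + b) ^ (1 + β) := by rw [h1]; field_simp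
    calc b ^ (1 + β) + (1 + β) * b ^ β * a
        = b ^ (1 + β) * (1 + (1 + β) * (a / b)) := by
          rw [Real.rpow_add hb0 1 β, Real.rpow_one]
          field_simp
      _ ≤ (a + b) ^ (1 + β) := h2
  -- and a^{1+β} = a * a^β ≤ a * b^β
  have h3 : a ^ (1 + β) ≤ b ^ β * a := by
    rw [Real.rpow_add' ha (by positivity), Real.rpow_one]
    have : a ^ β ≤ b ^ β := Real.rpow_le_rpow ha hab hβ0.le
    calc a * a ^ β ≤ a * b ^ β := mul_le_mul_of_nonneg_left this ha
      _ = b ^ β * a := mul_comm _ _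
  nlinarith [key, h3]
end

section
/- Let d ≥ 1 be an integer and 0 < β ≤ 1 with d < 2(1+β)/β. Then ∫_{ℝ^d} ( ∫_0^1 (4πu)^{−d/2} exp(−‖x‖²/(4u)) du )^{1+β} dx < ∞. -/
open MeasureTheory

/-- The Gaussian heat kernel on `ℝ^d`: `p_t(x) = (4πt)^{−d/2} exp(−‖x‖²/(4t))`. -/
noncomputable def heatKer (d : ℕ) (t : ℝ) (x : EuclideanSpace ℝ (Fin d)) : ℝ :=
  (4 * Real.pi * t) ^ (-(d : ℝ) / 2) * Real.exp (-‖x‖ ^ 2 / (4 * t))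

/-!
Hölder's inequality in `u` against a weight `u ^ s` gives
`(∫₀¹ p_u(x) du)^γ ≤ (∫₀¹ u^{sγ} p_u(x)^γ du) · (∫₀¹ u^{-sγ'} du)^{γ/γ'}` with `γ = 1 + β`,
`γ' = γ/β`. Integrating in `x` (Tonelli) and using the Gaussian integral
`∫ p_u^γ dx = c · u^{-dβ/2}`, both `u`-integrals are finite as soon as
`(dβ/2 - 1)/γ < s < β/γ`, and this interval is nonempty exactly when `dβ < 2(1 + β)`.
This is Minkowski's integral inequality `‖∫ p_u du‖_γ ≤ ∫ ‖p_u‖_γ du` in disguise.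
-/

open Real
open scoped ENNReal

section WeightedHolder

variable {α ι : Type*} [MeasurableSpace α] [MeasurableSpace ι] {p q : ℝ}

theorem rpow_lintegral_le_of_weight {μ : Measure α} (hpq : p.HolderConjugate q)
    {f w : α → ℝ≥0∞} (hf : AEMeasurable f μ) (hw : AEMeasurable w μ)
    (hw0 : ∀ᵐ a ∂μ, w a ≠ 0) (hw_top : ∀ᵐ a ∂μ, w a ≠ ∞) :
    (∫⁻ a, f a ∂μ) ^ p ≤
      (∫⁻ a, w a ^ p * f a ^ p ∂μ) * (∫⁻ a, (w a)⁻¹ ^ q ∂μ) ^ (p / q) := by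
  have hfactor : ∫⁻ a, f a ∂μ = ∫⁻ a, (w * f * w⁻¹) a ∂μ := by
    refine lintegral_congr_ae ?_
    filter_upwards [hw0, hw_top] with a ha0 ha_top
    simp only [Pi.mul_apply, Pi.inv_apply]
    rw [mul_comm (w a), mul_assoc, ENNReal.mul_inv_cancel ha0 ha_top, mul_one]
  have holder := ENNReal.lintegral_mul_le_Lp_mul_Lq μ hpq (hw.mul hf) hw.inv
  calc (∫⁻ a, f a ∂μ) ^ p
      ≤ ((∫⁻ a, (w * f) a ^ p ∂μ) ^ (1 / p) * (∫⁻ a, (w a)⁻¹ ^ q ∂μ) ^ (1 / q)) ^ p := by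
        rw [hfactor]; exact ENNReal.rpow_le_rpow holder hpq.nonneg
    _ = (∫⁻ a, w a ^ p * f a ^ p ∂μ) * (∫⁻ a, (w a)⁻¹ ^ q ∂μ) ^ (p / q) := by
        rw [ENNReal.mul_rpow_of_nonneg _ _ hpq.nonneg, ← ENNReal.rpow_mul, ← ENNReal.rpow_mul,
          one_div_mul_cancel hpq.ne_zero, ENNReal.rpow_one, one_div_mul_eq_div]
        simp only [Pi.mul_apply, ENNReal.mul_rpow_of_nonneg _ _ hpq.nonneg]

theorem lintegral_rpow_lintegral_le_of_weight {μ : Measure α} {ν : Measure ι} [SFinite μ]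
    [SFinite ν] (hpq : p.HolderConjugate q) {K : ι → α → ℝ≥0∞}
    (hK : Measurable (Function.uncurry K)) {w : ι → ℝ≥0∞} (hw : Measurable w)
    (hw0 : ∀ᵐ u ∂ν, w u ≠ 0) (hw_top : ∀ᵐ u ∂ν, w u ≠ ∞) :
    ∫⁻ x, (∫⁻ u, K u x ∂ν) ^ p ∂μ ≤
      (∫⁻ u, w u ^ p * ∫⁻ x, K u x ^ p ∂μ ∂ν) * (∫⁻ u, (w u)⁻¹ ^ q ∂ν) ^ (p / q) := by
  have hmeas : Measurable fun z : ι × α => w z.1 ^ p * K z.1 z.2 ^ p :=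
    (hw.comp measurable_fst).pow_const p |>.mul (hK.pow_const p)
  calc ∫⁻ x, (∫⁻ u, K u x ∂ν) ^ p ∂μ
      ≤ ∫⁻ x, (∫⁻ u, w u ^ p * K u x ^ p ∂ν) * (∫⁻ u, (w u)⁻¹ ^ q ∂ν) ^ (p / q) ∂μ :=
        lintegral_mono fun x => rpow_lintegral_le_of_weight hpq
          (hK.comp (measurable_id.prodMk measurable_const)).aemeasurable hw.aemeasurable hw0 hw_top
    _ = (∫⁻ x, ∫⁻ u, w u ^ p * K u x ^ p ∂ν ∂μ) * (∫⁻ u, (w u)⁻¹ ^ q ∂ν) ^ (p / q) :=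
        lintegral_mul_const _ hmeas.lintegral_prod_left'
    _ = _ := by
        rw [lintegral_lintegral_swap (f := fun x u => w u ^ p * K u x ^ p)
          (hmeas.comp measurable_swap).aemeasurable]
        congr 1
        refine lintegral_congr fun u => lintegral_const_mul _ ?_
        exact (hK.comp (measurable_const.prodMk measurable_id)).pow_const p

end WeightedHolder

theorem lintegral_Ioc_ofReal_rpow_lt_top {r : ℝ} (hr : -1 < r) (b : ℝ) :
    ∫⁻ u in Set.Ioc 0 b, ENNReal.ofReal u ^ r < ∞ := by
  rw [setLIntegral_congr_fun measurableSet_Ioc fun u hu => ENNReal.ofReal_rpow_of_pos hu.1]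
  exact (intervalIntegral.intervalIntegrable_rpow' hr).1.setLIntegral_lt_top

theorem lintegral_Ioc_inv_rpow_rpow_lt_top {s q : ℝ} (hsq : s * q < 1) :
    ∫⁻ u in Set.Ioc 0 1, (ENNReal.ofReal u ^ s)⁻¹ ^ q < ∞ := by
  simp_rw [← ENNReal.rpow_neg, ← ENNReal.rpow_mul]
  exact lintegral_Ioc_ofReal_rpow_lt_top (by linarith) 1

theorem ofReal_rpow_intervalIntegral_le {f : ℝ → ℝ} {a b p : ℝ} (hab : a ≤ b) (hp : 0 ≤ p)
    (hf : ∀ u ∈ Set.Ioc a b, 0 ≤ f u) :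
    ENNReal.ofReal ((∫ u in a..b, f u) ^ p) ≤ (∫⁻ u in Set.Ioc a b, ENNReal.ofReal (f u)) ^ p := by
  rw [intervalIntegral.integral_of_le hab,
    ← ENNReal.ofReal_rpow_of_nonneg (setIntegral_nonneg measurableSet_Ioc hf) hp]
  refine ENNReal.rpow_le_rpow ?_ hp
  calc ENNReal.ofReal (∫ u in Set.Ioc a b, f u) ≤ ‖∫ u in Set.Ioc a b, f u‖ₑ := ofReal_le_enorm _
    _ ≤ ∫⁻ u in Set.Ioc a b, ‖f u‖ₑ := enorm_integral_le_lintegral_enorm _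
    _ = _ := setLIntegral_congr_fun measurableSet_Ioc fun u hu => Real.enorm_eq_ofReal (hf u hu)

theorem heatKer_nonneg (d : ℕ) {t : ℝ} (ht : 0 ≤ t) (x : EuclideanSpace ℝ (Fin d)) :
    0 ≤ heatKer d t x := by
  unfold heatKer; positivity

theorem measurable_heatKer (d : ℕ) :
    Measurable fun z : ℝ × EuclideanSpace ℝ (Fin d) => heatKer d z.1 z.2 := by
  unfold heatKer; fun_prop

theorem lintegral_ofReal_heatKer_rpow (d : ℕ) {p t : ℝ} (hp : 0 < p) (ht : 0 < t) :
    ∫⁻ x, ENNReal.ofReal (heatKer d t x) ^ p =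
      ENNReal.ofReal (p ^ (-(d : ℝ) / 2) * (4 * π) ^ ((d : ℝ) * (1 - p) / 2)) *
        ENNReal.ofReal t ^ ((d : ℝ) * (1 - p) / 2) := by
  have hb : 0 < p / (4 * t) := by positivity
  have hpow : ∀ x : EuclideanSpace ℝ (Fin d), ENNReal.ofReal (heatKer d t x) ^ p =
      ENNReal.ofReal ((4 * π * t) ^ (-((d : ℝ) * p) / 2)) *
        ENNReal.ofReal (exp (-(p / (4 * t)) * ‖x‖ ^ 2)) := by
    intro x
    rw [ENNReal.ofReal_rpow_of_nonneg (heatKer_nonneg d ht.le x) hp.le,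
      ← ENNReal.ofReal_mul (by positivity), heatKer,
      mul_rpow (by positivity) (exp_nonneg _), ← rpow_mul (by positivity), ← exp_mul]
    congr 3 <;> field_simp
  have hgauss : ∫ x : EuclideanSpace ℝ (Fin d), exp (-(p / (4 * t)) * ‖x‖ ^ 2) =
      (4 * π * t) ^ ((d : ℝ) / 2) * p ^ (-(d : ℝ) / 2) := by
    rw [GaussianFourier.integral_rexp_neg_mul_sq_norm hb, finrank_euclideanSpace_fin,
      show π / (p / (4 * t)) = 4 * π * t * p⁻¹ by field_simp,
      mul_rpow (by positivity) (by positivity), inv_rpow hp.le, ← rpow_neg hp.le, neg_div]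
  have hint : Integrable fun x : EuclideanSpace ℝ (Fin d) => exp (-(p / (4 * t)) * ‖x‖ ^ 2) :=
    .of_integral_ne_zero (by rw [hgauss]; positivity)
  simp_rw [hpow]
  rw [lintegral_const_mul _ (by fun_prop), ← ofReal_integral_eq_lintegral_ofReal hint
    (.of_forall fun _ => exp_nonneg _), hgauss, ENNReal.ofReal_rpow_of_pos ht,
    ← ENNReal.ofReal_mul (by positivity), ← ENNReal.ofReal_mul (by positivity)]
  congr 1
  rw [show (d : ℝ) * (1 - p) / 2 = -((d : ℝ) * p) / 2 + d / 2 by ring,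
    rpow_add (by positivity), rpow_add ht, mul_rpow (by positivity) ht.le,
    mul_rpow (by positivity) ht.le]
  ring

theorem lintegral_rpow_intervalIntegral_heatKer_le (d : ℕ) {p q : ℝ} (hpq : p.HolderConjugate q)
    (s : ℝ) :
    ∫⁻ x, ENNReal.ofReal ((∫ u in (0 : ℝ)..1, heatKer d u x) ^ p) ≤
      (∫⁻ u in Set.Ioc 0 1, (ENNReal.ofReal u ^ s) ^ p *
          ∫⁻ x, ENNReal.ofReal (heatKer d u x) ^ p) *
        (∫⁻ u in Set.Ioc 0 1, (ENNReal.ofReal u ^ s)⁻¹ ^ q) ^ (p / q) := by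
  have hpos : ∀ᵐ u ∂volume.restrict (Set.Ioc (0 : ℝ) 1),
      ENNReal.ofReal u ≠ 0 ∧ ENNReal.ofReal u ≠ ⊤ :=
    (ae_restrict_iff' measurableSet_Ioc).2 <| .of_forall fun u hu =>
      ⟨(ENNReal.ofReal_pos.2 hu.1).ne', ENNReal.ofReal_ne_top⟩
  calc ∫⁻ x, ENNReal.ofReal ((∫ u in (0 : ℝ)..1, heatKer d u x) ^ p)
      ≤ ∫⁻ x, (∫⁻ u in Set.Ioc 0 1, ENNReal.ofReal (heatKer d u x)) ^ p :=
        lintegral_mono fun x => ofReal_rpow_intervalIntegral_le zero_le_one hpq.nonneg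
          fun u hu => heatKer_nonneg d hu.1.le x
    _ ≤ _ := lintegral_rpow_lintegral_le_of_weight hpq (measurable_heatKer d).ennreal_ofReal
          (by fun_prop) (hpos.mono fun u hu => (ENNReal.rpow_pos (pos_iff_ne_zero.2 hu.1) hu.2).ne')
          (hpos.mono fun u hu => ENNReal.rpow_ne_top_of_ne_zero hu.1 hu.2)

theorem lintegral_Ioc_rpow_mul_lintegral_heatKer_rpow_lt_top (d : ℕ) {p s : ℝ} (hp : 0 < p)
    (hs : -1 < s * p + (d : ℝ) * (1 - p) / 2) :
    ∫⁻ u in Set.Ioc 0 1, (ENNReal.ofReal u ^ s) ^ p *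
      ∫⁻ x, ENNReal.ofReal (heatKer d u x) ^ p < ∞ := by
  rw [setLIntegral_congr_fun measurableSet_Ioc fun u hu => by
    rw [lintegral_ofReal_heatKer_rpow d hp hu.1, ← ENNReal.rpow_mul, mul_left_comm,
      ← ENNReal.rpow_add _ _ (ENNReal.ofReal_pos.2 hu.1).ne' ENNReal.ofReal_ne_top],
    lintegral_const_mul' _ _ ENNReal.ofReal_ne_top]
  exact ENNReal.mul_lt_top ENNReal.ofReal_lt_top (lintegral_Ioc_ofReal_rpow_lt_top hs 1)

theorem stmt2_general (d : ℕ) (β : ℝ) (hβ0 : 0 < β)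
    (hdim : (d : ℝ) < 2 * (1 + β) / β) :
    ∫⁻ x : EuclideanSpace ℝ (Fin d),
      ENNReal.ofReal ((∫ u in (0:ℝ)..1, heatKer d u x) ^ (1 + β)) < ⊤ := by
  have hpq : (1 + β).HolderConjugate ((1 + β) / β) :=
    (Real.holderConjugate_iff_eq_conjExponent (by linarith)).2 (by ring)
  have he : (d : ℝ) * β / 2 < 1 + β := by
    have := (lt_div_iff₀ hβ0).1 hdim; linarith
  -- midpoint of the admissible range of weight exponents
  set s := ((d : ℝ) * β / 2 - 1 + β) / (2 * (1 + β))
  have hs : s * (1 + β) = ((d : ℝ) * β / 2 - 1 + β) / 2 := by simp only [s]; field_simp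
  have hkernel : -1 < s * (1 + β) + (d : ℝ) * (1 - (1 + β)) / 2 := by
    rw [hs, show (d : ℝ) * (1 - (1 + β)) / 2 = -((d : ℝ) * β / 2) by ring]
    linarith
  have hweight : s * ((1 + β) / β) < 1 := by
    rw [mul_div_assoc', hs, div_lt_one hβ0]
    linarith
  exact (lintegral_rpow_intervalIntegral_heatKer_le d hpq s).trans_lt <| ENNReal.mul_lt_top
    (lintegral_Ioc_rpow_mul_lintegral_heatKer_rpow_lt_top d (by linarith) hkernel)
    (ENNReal.rpow_lt_top_of_nonneg (by positivity) (lintegral_Ioc_inv_rpow_rpow_lt_top hweight).ne)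

/-- Finiteness (3.3) for `α = 2`: if `d < 2(1+β)/β` then
`∫_{ℝ^d} (∫_0^1 p_u(x) du)^{1+β} dx < ∞` for the Gaussian heat kernel. -/
theorem stmt2 (d : ℕ) (hd : 1 ≤ d) (β : ℝ) (hβ0 : 0 < β) (hβ1 : β ≤ 1)
    (hdim : (d : ℝ) < 2 * (1 + β) / β) :
    ∫⁻ x : EuclideanSpace ℝ (Fin d),
      ENNReal.ofReal ((∫ u in (0:ℝ)..1, heatKer d u x) ^ (1 + β)) < ⊤ :=
  stmt2_general d β hβ0 hdim
end

section
/- Let d ≥ 1 be an integer, 0 < α ≤ 2, 0 < β ≤ 1, and assume d < α(1+β)/β. Let q : ℝ^d → [0,∞) be measurable with q(x) ≤ c₂/(1+‖x‖^{d+α}) for some constant c₂ > 0, and set p_t(x) = t^{−d/α} q(t^{−1/α} x) for t > 0. Then ∫_{ℝ^d} ( ∫_0^1 p_u(x) du )^{1+β} dx < ∞. -/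
open MeasureTheory Set Metric

/-- The density at time `t` of a self-similar transition kernel on `ℝ^d`:
`p_t(x) = t^{−d/α} q(t^{−1/α} x)`. -/
noncomputable def pker (d : ℕ) (α : ℝ) (q : EuclideanSpace ℝ (Fin d) → ℝ) (t : ℝ)
    (x : EuclideanSpace ℝ (Fin d)) : ℝ :=
  t ^ (-(d : ℝ) / α) * q ((t ^ (-(1 : ℝ) / α)) • x)

/-- Finiteness (3.3): if `d < α(1+β)/β` and `q(x) ≤ c₂/(1+‖x‖^{d+α})`, then
`∫_{ℝ^d} (∫_0^1 p_u(x) du)^{1+β} dx < ∞`. -/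
theorem stmt3 (d : ℕ) (hd : 1 ≤ d) (α β : ℝ) (hα0 : 0 < α) (hα2 : α ≤ 2)
    (hβ0 : 0 < β) (hβ1 : β ≤ 1) (hdim : (d : ℝ) < α * (1 + β) / β)
    (q : EuclideanSpace ℝ (Fin d) → ℝ) (hqm : Measurable q) (hq0 : ∀ x, 0 ≤ q x)
    (c₂ : ℝ) (hc₂ : 0 < c₂) (hq : ∀ x, q x ≤ c₂ / (1 + ‖x‖ ^ ((d : ℝ) + α))) :
    ∫⁻ x : EuclideanSpace ℝ (Fin d),
      ENNReal.ofReal ((∫ u in (0:ℝ)..1, pker d α q u x) ^ (1 + β)) < ⊤ := by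
  haveI : Nonempty (Fin d) := ⟨⟨0, hd⟩⟩
  have h1β : (0:ℝ) < 1 + β := by linarith
  have hd0 : (0:ℝ) < d := by exact_mod_cast hd
  have hdb : (d:ℝ) * β < α * (1 + β) := (lt_div_iff₀ hβ0).1 hdim
  -- the intermediate exponent γ
  set γ : ℝ := (max ((d:ℝ) - α) 0 + (d:ℝ) / (1 + β)) / 2 with hγdef
  have hD0 : 0 < (d:ℝ) / (1 + β) := by positivity
  have hMD : max ((d:ℝ) - α) 0 < (d:ℝ) / (1 + β) := by
    rcases max_cases ((d:ℝ) - α) 0 with ⟨h, _⟩ | ⟨h, _⟩ <;> rw [h]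
    · rw [lt_div_iff₀ h1β]; nlinarith
    · exact hD0
  have hM0 : (0:ℝ) ≤ max ((d:ℝ) - α) 0 := le_max_right _ _
  have hMda : (d:ℝ) - α ≤ max ((d:ℝ) - α) 0 := le_max_left _ _
  have hγ0 : 0 < γ := by rw [hγdef]; linarith
  have hγda : (d:ℝ) - α < γ := by rw [hγdef]; linarith
  have hγD : γ < (d:ℝ) / (1 + β) := by rw [hγdef]; linarith
  have hγle : γ ≤ (d:ℝ) + α := by
    have : (d:ℝ) / (1 + β) ≤ d := by
      rw [div_le_iff₀ h1β]; nlinarith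
    linarith
  set σ₁ : ℝ := γ * (1 + β) with hσ₁def
  set σ₂ : ℝ := ((d:ℝ) + α) * (1 + β) with hσ₂def
  have hσ₁0 : 0 < σ₁ := mul_pos hγ0 h1β
  have hσ₁d : σ₁ < (d:ℝ) := by
    rw [hσ₁def]; rw [lt_div_iff₀ h1β] at hγD; exact hγD
  have hσ₂d : (d:ℝ) < σ₂ := by rw [hσ₂def]; nlinarith
  have hσ₂0 : 0 < σ₂ := lt_trans hd0 hσ₂d
  -- nonnegativity of the kernel for u ≥ 0
  have hpk0 : ∀ (x : EuclideanSpace ℝ (Fin d)) (u : ℝ), 0 ≤ u → 0 ≤ pker d α q u x :=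
    fun x u hu => mul_nonneg (Real.rpow_nonneg hu _) (hq0 _)
  have hF0 : ∀ x : EuclideanSpace ℝ (Fin d), 0 ≤ ∫ u in (0:ℝ)..1, pker d α q u x := fun x =>
    intervalIntegral.integral_nonneg zero_le_one (fun u hu => hpk0 x u hu.1)
  -- bound on q with a pure power
  have hqb : ∀ s : ℝ, 0 ≤ s → s ≤ (d:ℝ) + α → ∀ y : EuclideanSpace ℝ (Fin d), y ≠ 0 →
      q y ≤ c₂ * ‖y‖ ^ (-s) := by
    intro s hs0 hs1 y hy
    have hny : 0 < ‖y‖ := norm_pos_iff.2 hy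
    have hkey : ‖y‖ ^ s ≤ 1 + ‖y‖ ^ ((d:ℝ) + α) := by
      rcases le_total ‖y‖ 1 with h | h
      · have h1 := Real.rpow_le_one (norm_nonneg y) h hs0
        have h2 : (0:ℝ) ≤ ‖y‖ ^ ((d:ℝ) + α) := Real.rpow_nonneg (norm_nonneg y) _
        linarith
      · have h1 := Real.rpow_le_rpow_of_exponent_le h hs1
        linarith
    calc q y ≤ c₂ / (1 + ‖y‖ ^ ((d:ℝ) + α)) := hq y
      _ ≤ c₂ / ‖y‖ ^ s := by
          gcongr
      _ = c₂ * ‖y‖ ^ (-s) := by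
          rw [Real.rpow_neg (norm_nonneg y), div_eq_mul_inv]
  -- the key bound on the time integral
  have key : ∀ s : ℝ, 0 ≤ s → s ≤ (d:ℝ) + α → (d:ℝ) - α < s →
      ∀ x : EuclideanSpace ℝ (Fin d), x ≠ 0 →
      (∫ u in (0:ℝ)..1, pker d α q u x) ≤
        c₂ * (∫ u in (0:ℝ)..1, u ^ ((s - (d:ℝ)) / α)) * ‖x‖ ^ (-s) := by
    intro s hs0 hs1 hs2 x hx
    have hnx : 0 < ‖x‖ := norm_pos_iff.2 hx
    have hexp : (-1:ℝ) < (s - (d:ℝ)) / α := by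
      rw [lt_div_iff₀ hα0]; linarith
    have hII : IntervalIntegrable (fun u : ℝ => c₂ * ‖x‖ ^ (-s) * u ^ ((s - (d:ℝ)) / α))
        volume 0 1 := (intervalIntegral.intervalIntegrable_rpow' hexp).const_mul _
    have hInt : IntegrableOn (fun u : ℝ => c₂ * ‖x‖ ^ (-s) * u ^ ((s - (d:ℝ)) / α))
        (Ioc (0:ℝ) 1) volume :=
      (intervalIntegrable_iff_integrableOn_Ioc_of_le zero_le_one).1 hII
    rw [intervalIntegral.integral_of_le zero_le_one,
      intervalIntegral.integral_of_le zero_le_one]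
    have hmono : (∫ u in Ioc (0:ℝ) 1, pker d α q u x) ≤
        ∫ u in Ioc (0:ℝ) 1, c₂ * ‖x‖ ^ (-s) * u ^ ((s - (d:ℝ)) / α) := by
      apply integral_mono_of_nonneg
      · filter_upwards [ae_restrict_mem measurableSet_Ioc] with u hu using hpk0 x u hu.1.le
      · exact hInt
      · filter_upwards [ae_restrict_mem measurableSet_Ioc] with u hu
        have hu0 : 0 < u := hu.1
        have hupos : 0 < u ^ (-(1:ℝ)/α) := Real.rpow_pos_of_pos hu0 _
        have hy : (u ^ (-(1:ℝ)/α)) • x ≠ 0 := smul_ne_zero (ne_of_gt hupos) hx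
        have h2 := hqb s hs0 hs1 _ hy
        have hnorm : ‖(u ^ (-(1:ℝ)/α)) • x‖ = u ^ (-(1:ℝ)/α) * ‖x‖ := by
          rw [norm_smul, Real.norm_eq_abs, abs_of_pos hupos]
        rw [hnorm] at h2
        have hstep : pker d α q u x ≤
            u ^ (-(d:ℝ)/α) * (c₂ * (u ^ (-(1:ℝ)/α) * ‖x‖) ^ (-s)) := by
          unfold pker
          exact mul_le_mul_of_nonneg_left h2 (Real.rpow_nonneg hu0.le _)
        refine hstep.trans (le_of_eq ?_)
        rw [Real.mul_rpow hupos.le (norm_nonneg x)]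
        rw [show (u ^ (-(1:ℝ)/α)) ^ (-s) = u ^ ((-(1:ℝ)/α) * (-s)) from
          (Real.rpow_mul hu0.le _ _).symm]
        rw [show u ^ (-(d:ℝ)/α) * (c₂ * (u ^ ((-(1:ℝ)/α) * (-s)) * ‖x‖ ^ (-s))) =
          c₂ * ‖x‖ ^ (-s) * (u ^ (-(d:ℝ)/α) * u ^ ((-(1:ℝ)/α) * (-s))) from by ring]
        rw [← Real.rpow_add hu0,
          show -(d:ℝ)/α + (-(1:ℝ)/α) * (-s) = (s - (d:ℝ))/α from by field_simp; ring]
    refine hmono.trans (le_of_eq ?_)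
    rw [MeasureTheory.integral_const_mul]
    ring
  -- constants
  set K₁ : ℝ := ∫ u in (0:ℝ)..1, u ^ ((γ - (d:ℝ)) / α) with hK₁def
  set K₂ : ℝ := ∫ u in (0:ℝ)..1, u ^ (((d:ℝ) + α - (d:ℝ)) / α) with hK₂def
  have hK₁0 : 0 ≤ K₁ :=
    intervalIntegral.integral_nonneg zero_le_one (fun u hu => Real.rpow_nonneg hu.1 _)
  have hK₂0 : 0 ≤ K₂ :=
    intervalIntegral.integral_nonneg zero_le_one (fun u hu => Real.rpow_nonneg hu.1 _)
  set C : ℝ := max ((c₂ * K₁) ^ (1 + β)) ((c₂ * K₂) ^ (1 + β)) with hCdef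
  have hC0 : 0 ≤ C :=
    le_trans (Real.rpow_nonneg (mul_nonneg hc₂.le hK₁0) _) (le_max_left _ _)
  -- pointwise bound for x ≠ 0
  have hpt : ∀ x : EuclideanSpace ℝ (Fin d), x ≠ 0 →
      (∫ u in (0:ℝ)..1, pker d α q u x) ^ (1 + β) ≤
        C * min (‖x‖ ^ (-σ₁)) (‖x‖ ^ (-σ₂)) := by
    intro x hx
    have b1 : (∫ u in (0:ℝ)..1, pker d α q u x) ^ (1 + β) ≤
        (c₂ * K₁) ^ (1 + β) * ‖x‖ ^ (-σ₁) := by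
      calc (∫ u in (0:ℝ)..1, pker d α q u x) ^ (1 + β)
          ≤ (c₂ * K₁ * ‖x‖ ^ (-γ)) ^ (1 + β) :=
            Real.rpow_le_rpow (hF0 x) (key γ hγ0.le hγle hγda x hx) h1β.le
        _ = (c₂ * K₁) ^ (1 + β) * ‖x‖ ^ (-σ₁) := by
            rw [Real.mul_rpow (mul_nonneg hc₂.le hK₁0) (Real.rpow_nonneg (norm_nonneg x) _),
              ← Real.rpow_mul (norm_nonneg x)]
            rw [hσ₁def]; ring_nf
    have b2 : (∫ u in (0:ℝ)..1, pker d α q u x) ^ (1 + β) ≤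
        (c₂ * K₂) ^ (1 + β) * ‖x‖ ^ (-σ₂) := by
      calc (∫ u in (0:ℝ)..1, pker d α q u x) ^ (1 + β)
          ≤ (c₂ * K₂ * ‖x‖ ^ (-((d:ℝ) + α))) ^ (1 + β) :=
            Real.rpow_le_rpow (hF0 x)
              (key ((d:ℝ) + α) (by linarith) le_rfl (by linarith) x hx) h1β.le
        _ = (c₂ * K₂) ^ (1 + β) * ‖x‖ ^ (-σ₂) := by
            rw [Real.mul_rpow (mul_nonneg hc₂.le hK₂0) (Real.rpow_nonneg (norm_nonneg x) _),
              ← Real.rpow_mul (norm_nonneg x)]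
            rw [hσ₂def]; ring_nf
    rw [mul_min_of_nonneg _ _ hC0]
    refine le_min ?_ ?_
    · exact b1.trans (mul_le_mul_of_nonneg_right (le_max_left _ _)
        (Real.rpow_nonneg (norm_nonneg x) _))
    · exact b2.trans (mul_le_mul_of_nonneg_right (le_max_right _ _)
        (Real.rpow_nonneg (norm_nonneg x) _))
  -- the comparison function and its lintegral finiteness via layer cake
  set g : EuclideanSpace ℝ (Fin d) → ℝ := fun x => min (‖x‖ ^ (-σ₁)) (‖x‖ ^ (-σ₂)) with hgdef
  have hg0 : ∀ x, 0 ≤ g x := fun x =>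
    le_min (Real.rpow_nonneg (norm_nonneg x) _) (Real.rpow_nonneg (norm_nonneg x) _)
  have hgmeas : Measurable g :=
    (measurable_norm.pow measurable_const).min (measurable_norm.pow measurable_const)
  -- the subset lemma
  have hsub : ∀ σ t : ℝ, 0 < σ → 0 < t → ∀ a : EuclideanSpace ℝ (Fin d),
      t ≤ ‖a‖ ^ (-σ) → ‖a‖ ≤ t ^ (-σ⁻¹) := by
    intro σ t hσ ht a hta
    have ha : a ≠ 0 := by
      rintro rfl
      rw [norm_zero, Real.zero_rpow (by linarith : -σ ≠ 0)] at hta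
      linarith
    have hna : 0 < ‖a‖ := norm_pos_iff.2 ha
    have h := Real.rpow_le_rpow_of_nonpos ht hta
      (by rw [neg_nonpos]; positivity : -σ⁻¹ ≤ 0)
    have heq : (‖a‖ ^ (-σ)) ^ (-σ⁻¹) = ‖a‖ := by
      rw [← Real.rpow_mul (norm_nonneg a), neg_mul_neg, mul_inv_cancel₀ hσ.ne',
        Real.rpow_one]
    linarith [heq ▸ h]
  have hfr : Module.finrank ℝ (EuclideanSpace ℝ (Fin d)) = d := by
    simp [finrank_euclideanSpace]
  -- measure of superlevel sets
  have hlev : ∀ σ t : ℝ, 0 < σ → 0 < t →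
      (∀ a : EuclideanSpace ℝ (Fin d), g a ≤ ‖a‖ ^ (-σ)) →
      volume {a : EuclideanSpace ℝ (Fin d) | t ≤ g a} ≤
        ENNReal.ofReal (t ^ (-((d:ℝ) / σ))) * volume (ball (0 : EuclideanSpace ℝ (Fin d)) 1) := by
    intro σ t hσ ht hle
    have h1 : {a : EuclideanSpace ℝ (Fin d) | t ≤ g a} ⊆
        closedBall (0 : EuclideanSpace ℝ (Fin d)) (t ^ (-σ⁻¹)) := by
      intro a ha
      rw [mem_closedBall_zero_iff]
      exact hsub σ t hσ ht a (le_trans ha (hle a))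
    calc volume {a : EuclideanSpace ℝ (Fin d) | t ≤ g a}
        ≤ volume (closedBall (0 : EuclideanSpace ℝ (Fin d)) (t ^ (-σ⁻¹))) := measure_mono h1
      _ = ENNReal.ofReal ((t ^ (-σ⁻¹)) ^ Module.finrank ℝ (EuclideanSpace ℝ (Fin d))) *
            volume (ball (0 : EuclideanSpace ℝ (Fin d)) 1) :=
          Measure.addHaar_closedBall _ _ (Real.rpow_nonneg ht.le _)
      _ = ENNReal.ofReal (t ^ (-((d:ℝ) / σ))) *
            volume (ball (0 : EuclideanSpace ℝ (Fin d)) 1) := by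
          rw [hfr, ← Real.rpow_natCast (t ^ (-σ⁻¹)) d, ← Real.rpow_mul ht.le]
          congr 2
          field_simp
    
  have hgfin : ∫⁻ x : EuclideanSpace ℝ (Fin d), ENNReal.ofReal (g x) < ⊤ := by
    rw [lintegral_eq_lintegral_meas_le volume (ae_of_all _ hg0) hgmeas.aemeasurable]
    have hvb : volume (ball (0 : EuclideanSpace ℝ (Fin d)) 1) < ⊤ := measure_ball_lt_top
    calc (∫⁻ t in Ioi (0:ℝ), volume {a : EuclideanSpace ℝ (Fin d) | t ≤ g a})
        ≤ ∫⁻ t in Ioc (0:ℝ) 1 ∪ Ioi 1, volume {a : EuclideanSpace ℝ (Fin d) | t ≤ g a} :=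
          lintegral_mono_set Ioi_subset_Ioc_union_Ioi
      _ ≤ (∫⁻ t in Ioc (0:ℝ) 1, volume {a : EuclideanSpace ℝ (Fin d) | t ≤ g a}) +
            ∫⁻ t in Ioi (1:ℝ), volume {a : EuclideanSpace ℝ (Fin d) | t ≤ g a} :=
          lintegral_union_le _ _ _
      _ < ⊤ := by
          refine ENNReal.add_lt_top.2 ⟨?_, ?_⟩
          · -- small t : use σ₂
            have hb : ∀ t ∈ Ioc (0:ℝ) 1,
                volume {a : EuclideanSpace ℝ (Fin d) | t ≤ g a} ≤
                  ENNReal.ofReal (t ^ (-((d:ℝ) / σ₂))) *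
                    volume (ball (0 : EuclideanSpace ℝ (Fin d)) 1) := fun t ht =>
              hlev σ₂ t hσ₂0 ht.1 (fun a => min_le_right _ _)
            refine lt_of_le_of_lt (setLIntegral_mono' measurableSet_Ioc hb) ?_
            rw [lintegral_mul_const' _ _ hvb.ne]
            refine ENNReal.mul_lt_top ?_ hvb
            refine IntegrableOn.setLIntegral_lt_top ?_
            rw [← intervalIntegrable_iff_integrableOn_Ioc_of_le zero_le_one]
            apply intervalIntegral.intervalIntegrable_rpow'
            rw [neg_lt_neg_iff, div_lt_one hσ₂0]
            exact hσ₂d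
          · -- large t : use σ₁
            have hb : ∀ t ∈ Ioi (1:ℝ),
                volume {a : EuclideanSpace ℝ (Fin d) | t ≤ g a} ≤
                  ENNReal.ofReal (t ^ (-((d:ℝ) / σ₁))) *
                    volume (ball (0 : EuclideanSpace ℝ (Fin d)) 1) := fun t ht =>
              hlev σ₁ t hσ₁0 (lt_trans one_pos ht) (fun a => min_le_left _ _)
            refine lt_of_le_of_lt (setLIntegral_mono' measurableSet_Ioi hb) ?_
            rw [lintegral_mul_const' _ _ hvb.ne]
            refine ENNReal.mul_lt_top ?_ hvb
            refine IntegrableOn.setLIntegral_lt_top ?_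
            refine integrableOn_Ioi_rpow_of_lt ?_ one_pos
            rw [neg_lt_neg_iff, lt_div_iff₀ hσ₁0, one_mul]
            exact hσ₁d
  -- a.e. pointwise comparison and conclusion
  have h0 : ∀ᵐ x : EuclideanSpace ℝ (Fin d), x ≠ 0 := by
    rw [ae_iff]
    simpa using measure_singleton (0 : EuclideanSpace ℝ (Fin d))
  have hae : ∀ᵐ x : EuclideanSpace ℝ (Fin d),
      ENNReal.ofReal ((∫ u in (0:ℝ)..1, pker d α q u x) ^ (1 + β)) ≤
        ENNReal.ofReal (C * g x) := by
    filter_upwards [h0] with x hx using ENNReal.ofReal_le_ofReal (hpt x hx)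
  calc ∫⁻ x : EuclideanSpace ℝ (Fin d),
        ENNReal.ofReal ((∫ u in (0:ℝ)..1, pker d α q u x) ^ (1 + β))
      ≤ ∫⁻ x : EuclideanSpace ℝ (Fin d), ENNReal.ofReal (C * g x) := lintegral_mono_ae hae
    _ = ∫⁻ x : EuclideanSpace ℝ (Fin d), ENNReal.ofReal C * ENNReal.ofReal (g x) := by
        apply lintegral_congr
        intro x
        rw [ENNReal.ofReal_mul hC0]
    _ = ENNReal.ofReal C * ∫⁻ x : EuclideanSpace ℝ (Fin d), ENNReal.ofReal (g x) :=
        lintegral_const_mul' _ _ ENNReal.ofReal_ne_top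
    _ < ⊤ := ENNReal.mul_lt_top ENNReal.ofReal_lt_top hgfin
end

section
/- Let d ≥ 1 be an integer, 0 < α ≤ 2, 0 < β ≤ 1. Let q : ℝ^d → [0,∞) be measurable and set p_t(x) = t^{−d/α} q(t^{−1/α} x) for t > 0. Then for every a > 0, every k ≥ 1, all 0 ≤ t₁ < ⋯ < t_k and z₁,…,z_k ∈ ℝ, one has the identity (in [0,∞]): ∫_{ℝ^d} ∫_0^∞ | Σ_{j=1}^k z_j 𝟙_{[0, a t_j]}(r) ∫_r^{a t_j} p_{u−r}(x) du |^{1+β} dr dx = a^{2+β−(d/α)β} · ∫_{ℝ^d} ∫_0^∞ | Σ_{j=1}^k z_j 𝟙_{[0, t_j]}(r) ∫_r^{t_j} p_{u−r}(x) du |^{1+β} dr dx. (This identity expresses the self-similarity of the limit process ξ with index H = (2+β−(d/α)β)/(1+β).) -/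
open MeasureTheory

/-!
Self-similarity `p_{a s}(x) = a^{-d/α} p_s(a^{-1/α} x)` and the substitution `u = a u'`
turn the integrand at times `a t_j`, `a r` and point `x` into `a^{1-d/α}` times the integrand at
times `t_j`, `r` and point `a^{-1/α} x`. The substitutions `r = a r'` and `x = a^{1/α} x'` then
contribute the Jacobians `a` and `a^{d/α}`, and `1 + (1 - d/α)(1 + β) + d/α = 2 + β - (d/α) β`.
-/

open Set Module

/-- Unlike `Real.mul_rpow`, `v` may be negative (`pker` is also evaluated at negative times). -/
theorem Real.mul_rpow_of_pos_left {a : ℝ} (ha : 0 < a) (v c : ℝ) :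
    (a * v) ^ c = a ^ c * v ^ c := by
  rcases lt_trichotomy v 0 with hv | rfl | hv
  · rw [Real.rpow_def_of_neg (mul_neg_of_pos_of_neg ha hv), Real.rpow_def_of_neg hv,
      Real.rpow_def_of_pos ha, Real.log_mul ha.ne' hv.ne, add_mul, Real.exp_add, mul_assoc]
  · rcases eq_or_ne c 0 with rfl | hc
    · simp
    · simp [Real.zero_rpow hc]
  · exact Real.mul_rpow ha.le hv.le

theorem lintegral_comp_smul {E : Type*} [NormedAddCommGroup E] [NormedSpace ℝ E]
    [MeasurableSpace E] [BorelSpace E] [FiniteDimensional ℝ E] (μ : Measure E)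
    [μ.IsAddHaarMeasure] (f : E → ENNReal) {r : ℝ} (hr : r ≠ 0) :
    ∫⁻ x, f (r • x) ∂μ = ENNReal.ofReal |(r ^ finrank ℝ E)⁻¹| * ∫⁻ x, f x ∂μ := by
  let e : E ≃ᵐ E := (Homeomorph.smulOfNeZero r hr).toMeasurableEquiv
  rw [← smul_eq_mul, ← lintegral_smul_measure, ← Measure.map_addHaar_smul μ hr]
  exact (lintegral_map_equiv f e).symm

theorem setLIntegral_Ioi_zero_eq_mul_comp_mul_left (f : ℝ → ENNReal) {b : ℝ} (hb : 0 < b) :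
    ∫⁻ x in Ioi 0, f x = ENNReal.ofReal b * ∫⁻ x in Ioi 0, f (b * x) := by
  have hpre : ∀ x, (Ioi (0 : ℝ)).indicator f (b * x) = (Ioi 0).indicator (fun x => f (b * x)) x :=
    fun x => by simp only [indicator, mem_Ioi, mul_pos_iff_of_pos_left hb]
  have hscale := lintegral_comp_smul volume ((Ioi (0 : ℝ)).indicator f) hb.ne'
  simp only [smul_eq_mul, finrank_self, pow_one] at hscale
  rw [← lintegral_indicator measurableSet_Ioi, ← lintegral_indicator measurableSet_Ioi,
    ← lintegral_congr hpre, hscale,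
    abs_of_pos (inv_pos.2 hb), ← mul_assoc, ← ENNReal.ofReal_mul hb.le, mul_inv_cancel₀ hb.ne',
    ENNReal.ofReal_one, one_mul]

section Scaling

variable {d : ℕ} {α : ℝ} (q : EuclideanSpace ℝ (Fin d) → ℝ) {a : ℝ}

theorem pker_mul_left (ha : 0 < a) (s : ℝ) (x : EuclideanSpace ℝ (Fin d)) :
    pker d α q (a * s) x = a ^ (-(d : ℝ) / α) * pker d α q s (a ^ (-(1 : ℝ) / α) • x) := by
  rw [pker, pker, Real.mul_rpow_of_pos_left ha, Real.mul_rpow_of_pos_left ha, mul_smul,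
    smul_comm, mul_assoc]

theorem intervalIntegral_pker_mul_left (ha : 0 < a) (r T : ℝ) (x : EuclideanSpace ℝ (Fin d)) :
    ∫ u in (a * r)..(a * T), pker d α q (u - a * r) x
      = a ^ (1 - (d : ℝ) / α) * ∫ u in r..T, pker d α q (u - r) (a ^ (-(1 : ℝ) / α) • x) := by
  rw [intervalIntegral.integral_comp_sub_right (fun s => pker d α q s x),
    intervalIntegral.integral_comp_sub_right (fun s => pker d α q s _), sub_self, sub_self,
    ← mul_sub]
  have hsubst := intervalIntegral.smul_integral_comp_mul_left (fun s => pker d α q s x) a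
    (a := 0) (b := T - r)
  rw [mul_zero] at hsubst
  rw [← hsubst]
  simp only [pker_mul_left q ha, intervalIntegral.integral_const_mul, smul_eq_mul, ← mul_assoc]
  rw [sub_eq_add_neg (1 : ℝ), Real.rpow_add ha, Real.rpow_one, neg_div]

variable {k : ℕ}

noncomputable def xiIntegrand (d : ℕ) (α : ℝ) (q : EuclideanSpace ℝ (Fin d) → ℝ)
    (t z : Fin k → ℝ) (r : ℝ) (x : EuclideanSpace ℝ (Fin d)) : ℝ :=
  ∑ j, z j * (Icc (0 : ℝ) (t j)).indicator (fun _ => (1 : ℝ)) r *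
    ∫ u in r..(t j), pker d α q (u - r) x

theorem xiIntegrand_mul_left (ha : 0 < a) (t z : Fin k → ℝ) (r : ℝ)
    (x : EuclideanSpace ℝ (Fin d)) :
    xiIntegrand d α q (fun j => a * t j) z (a * r) x
      = a ^ (1 - (d : ℝ) / α) * xiIntegrand d α q t z r (a ^ (-(1 : ℝ) / α) • x) := by
  rw [xiIntegrand, xiIntegrand, Finset.mul_sum]
  refine Finset.sum_congr rfl fun j _ => ?_
  have hmem : a * r ∈ Icc 0 (a * t j) ↔ r ∈ Icc 0 (t j) := by
    simp only [mem_Icc, mul_nonneg_iff_of_pos_left ha, mul_le_mul_iff_of_pos_left ha]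
  rw [indicator_apply, indicator_apply, if_congr hmem rfl rfl,
    intervalIntegral_pker_mul_left q ha]
  ring

theorem setLIntegral_Ioi_rpow_xiIntegrand_mul_left (ha : 0 < a) (t z : Fin k → ℝ) (p : ℝ)
    (x : EuclideanSpace ℝ (Fin d)) :
    ∫⁻ r in Ioi 0, ENNReal.ofReal (|xiIntegrand d α q (fun j => a * t j) z r x| ^ p)
      = ENNReal.ofReal (a * (a ^ (1 - (d : ℝ) / α)) ^ p) *
        ∫⁻ r in Ioi 0,
          ENNReal.ofReal (|xiIntegrand d α q t z r (a ^ (-(1 : ℝ) / α) • x)| ^ p) := by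
  have hc : 0 < a ^ (1 - (d : ℝ) / α) := by positivity
  rw [setLIntegral_Ioi_zero_eq_mul_comp_mul_left _ ha]
  simp_rw [xiIntegrand_mul_left q ha, abs_mul, abs_of_pos hc, Real.mul_rpow hc.le (abs_nonneg _),
    ENNReal.ofReal_mul (Real.rpow_nonneg hc.le p)]
  rw [lintegral_const_mul' _ _ ENNReal.ofReal_ne_top, ← mul_assoc, ← ENNReal.ofReal_mul ha.le]

end Scaling

theorem stmt7_general (d : ℕ) (α β : ℝ)
    (q : EuclideanSpace ℝ (Fin d) → ℝ)
    (a : ℝ) (ha : 0 < a) (k : ℕ)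
    (t : Fin k → ℝ) (z : Fin k → ℝ) :
    (∫⁻ x : EuclideanSpace ℝ (Fin d), ∫⁻ r in Set.Ioi (0:ℝ),
        ENNReal.ofReal
          (|∑ j, z j * (Set.Icc (0:ℝ) (a * t j)).indicator (fun _ => (1:ℝ)) r *
              ∫ u in r..(a * t j), pker d α q (u - r) x| ^ (1 + β)))
      = ENNReal.ofReal (a ^ (2 + β - ((d : ℝ) / α) * β)) *
        ∫⁻ x : EuclideanSpace ℝ (Fin d), ∫⁻ r in Set.Ioi (0:ℝ),
          ENNReal.ofReal
            (|∑ j, z j * (Set.Icc (0:ℝ) (t j)).indicator (fun _ => (1:ℝ)) r *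
                ∫ u in r..(t j), pker d α q (u - r) x| ^ (1 + β)) := by
  have hb : 0 < a ^ (-(1 : ℝ) / α) := by positivity
  have hexp : a * (a ^ (1 - (d : ℝ) / α)) ^ (1 + β) * |((a ^ (-(1 : ℝ) / α)) ^ d)⁻¹|
      = a ^ (2 + β - ((d : ℝ) / α) * β) := by
    rw [abs_of_pos (by positivity), ← Real.rpow_natCast, ← Real.rpow_mul ha.le,
      ← Real.rpow_mul ha.le, ← Real.rpow_neg ha.le, mul_comm a, ← Real.rpow_add_one ha.ne',
      ← Real.rpow_add ha]
    congr 1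
    ring
  change ∫⁻ x, ∫⁻ r in Ioi 0,
      ENNReal.ofReal (|xiIntegrand d α q (fun j => a * t j) z r x| ^ (1 + β))
    = _ * ∫⁻ x, ∫⁻ r in Ioi 0, ENNReal.ofReal (|xiIntegrand d α q t z r x| ^ (1 + β))
  simp_rw [setLIntegral_Ioi_rpow_xiIntegrand_mul_left q ha]
  rw [lintegral_const_mul' _ _ ENNReal.ofReal_ne_top, lintegral_comp_smul volume
    (fun x => ∫⁻ r in Ioi 0, ENNReal.ofReal (|xiIntegrand d α q t z r x| ^ (1 + β))) hb.ne',
    finrank_euclideanSpace_fin, ← mul_assoc, ← ENNReal.ofReal_mul (by positivity), hexp]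

/-- Self-similarity identity for the limit process `ξ` (Proposition 2.3(b)): for every
`a > 0`, `0 ≤ t₁ < ⋯ < t_k` and `z₁, …, z_k ∈ ℝ`,
`∫_{ℝ^d}∫_0^∞ |Σ_j z_j 𝟙_{[0,a t_j]}(r) ∫_r^{a t_j} p_{u−r}(x) du|^{1+β} dr dx
  = a^{2+β−(d/α)β} ∫_{ℝ^d}∫_0^∞ |Σ_j z_j 𝟙_{[0,t_j]}(r) ∫_r^{t_j} p_{u−r}(x) du|^{1+β} dr dx`
as an identity in `[0,∞]`. -/
theorem stmt7 (d : ℕ) (hd : 1 ≤ d) (α β : ℝ) (hα0 : 0 < α) (hα2 : α ≤ 2)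
    (hβ0 : 0 < β) (hβ1 : β ≤ 1)
    (q : EuclideanSpace ℝ (Fin d) → ℝ) (hqm : Measurable q) (hq0 : ∀ x, 0 ≤ q x)
    (a : ℝ) (ha : 0 < a) (k : ℕ) (hk : 1 ≤ k)
    (t : Fin k → ℝ) (ht0 : ∀ j, 0 ≤ t j) (htmono : StrictMono t) (z : Fin k → ℝ) :
    (∫⁻ x : EuclideanSpace ℝ (Fin d), ∫⁻ r in Set.Ioi (0:ℝ),
        ENNReal.ofReal
          (|∑ j, z j * (Set.Icc (0:ℝ) (a * t j)).indicator (fun _ => (1:ℝ)) r *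
              ∫ u in r..(a * t j), pker d α q (u - r) x| ^ (1 + β)))
      = ENNReal.ofReal (a ^ (2 + β - ((d : ℝ) / α) * β)) *
        ∫⁻ x : EuclideanSpace ℝ (Fin d), ∫⁻ r in Set.Ioi (0:ℝ),
          ENNReal.ofReal
            (|∑ j, z j * (Set.Icc (0:ℝ) (t j)).indicator (fun _ => (1:ℝ)) r *
                ∫ u in r..(t j), pker d α q (u - r) x| ^ (1 + β)) :=
  stmt7_general d α β q a ha k t z
end

section
/- Let d ≥ 1 be an integer, 0 < α < 2, 0 < β < 1 with α/β < d < α(1+β)/β and β > d/(d+α). Let q : ℝ^d → [0,∞) be measurable with q(x) ≤ c₂/(1+‖x‖^{d+α}) for some c₂ > 0, and set p_t(x) = t^{−d/α} q(t^{−1/α} x) for t > 0. Fix 0 ≤ u < v < s < t and z > 0, and for T > 0 define U_T(x,r) = z( 𝟙_{[0,s+T]}(r) ∫_{s+T}^{t+T} p_{r'−r}(x) dr' + 𝟙_{(s+T,t+T]}(r) ∫_r^{t+T} p_{r'−r}(x) dr' ) and R(x,r) = 𝟙_{[0,u]}(r) ∫_u^v p_{r'−r}(x) dr' + 𝟙_{(u,v]}(r)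 ∫_r^v p_{r'−r}(x) dr'. Then there is a constant C > 0 (independent of T) such that for all T ≥ 1: ∫_{ℝ^d} ∫_0^∞ ( (U_T+R)^{1+β} − U_T^{1+β} − R^{1+β} )(x,r) dr dx ≤ C·T^{−d/α}. -/
/-
For `a, b ≥ 0` and `0 ≤ β ≤ 1`, `(a + b)^(1+β) - a^(1+β) - b^(1+β) ≤ (1+β) a b^β`, since the
derivative in `a` of the difference is controlled by the subadditivity of `t ↦ t^β`. Take
`a = U_T`, `b = R`. As `R(x, r) = 0` unless `r ∈ [0, v]`, only such `r` matter, and there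
`U_T` integrates the kernel at times `r' - r ≥ T` (because `v < s`), so
`U_T ≤ z c₂ (t - s) T^(-d/α)` by `p_τ ≤ c₂ τ^(-d/α)`. By scaling, `p_τ(x) ≤ c₂ τ ‖x‖^(-(d+α))` and
`p_τ(x) ≤ c₂ ‖x‖^(-d)`, so `R^β ≲ min(‖x‖^(-dβ), ‖x‖^(-(d+α)β))`, which is integrable on `ℝ^d`
because `dβ < d < (d+α)β`, the last inequality being `β > d/(d+α)`.
-/

open MeasureTheory

open Set

lemma add_rpow_one_add_sub_rpow_sub_rpow_le {a b β : ℝ} (ha : 0 ≤ a) (hb : 0 ≤ b)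
    (hβ0 : 0 ≤ β) (hβ1 : β ≤ 1) :
    (a + b) ^ (1 + β) - a ^ (1 + β) - b ^ (1 + β) ≤ (1 + β) * a * b ^ β := by
  set g : ℝ → ℝ := fun y => (b + y) ^ (1 + β) - y ^ (1 + β) - (1 + β) * y * b ^ β
  have hp : 1 ≤ 1 + β := by linarith
  have hg : ∀ y, HasDerivAt g ((1 + β) * ((b + y) ^ β - y ^ β - b ^ β)) y := fun y => by
    have h1 := ((hasDerivAt_id y).const_add b).rpow_const (Or.inr hp)
    have h2 := (hasDerivAt_id y).rpow_const (Or.inr hp)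
    have h3 := ((hasDerivAt_id y).const_mul (1 + β)).mul_const (b ^ β)
    exact ((h1.sub h2).sub h3).congr_deriv (by simp only [id, add_sub_cancel_left]; ring)
  have hanti : AntitoneOn g (Ici 0) := by
    refine antitoneOn_of_deriv_nonpos (convex_Ici 0)
      (fun y _ => (hg y).continuousAt.continuousWithinAt)
      (fun y _ => (hg y).differentiableAt.differentiableWithinAt) fun y hy => ?_
    rw [interior_Ici] at hy
    rw [(hg y).deriv]
    have := Real.rpow_add_le_add_rpow hb (le_of_lt hy) hβ0 hβ1
    nlinarith
  have := hanti self_mem_Ici ha ha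
  simp only [g, add_zero, Real.zero_rpow (by linarith : (1:ℝ) + β ≠ 0), mul_zero, zero_mul,
    sub_zero] at this
  rw [add_comm a b]
  linarith

lemma Real.min_rpow {a b p : ℝ} (ha : 0 ≤ a) (hb : 0 ≤ b) (hp : 0 ≤ p) :
    min a b ^ p = min (a ^ p) (b ^ p) := by
  rcases le_total a b with h | h
  · rw [min_eq_left h, min_eq_left (Real.rpow_le_rpow ha h hp)]
  · rw [min_eq_right h, min_eq_right (Real.rpow_le_rpow hb h hp)]

lemma integrable_min_norm_rpow_neg {E : Type*} [NormedAddCommGroup E] [NormedSpace ℝ E]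
    [FiniteDimensional ℝ E] [Nontrivial E] [MeasurableSpace E] [BorelSpace E]
    (μ : Measure E) [μ.IsAddHaarMeasure] {p₁ p₂ : ℝ}
    (h₁ : p₁ < Module.finrank ℝ E) (h₂ : (Module.finrank ℝ E : ℝ) < p₂) :
    Integrable (fun x : E => min (‖x‖ ^ (-p₁)) (‖x‖ ^ (-p₂))) μ := by
  set n := Module.finrank ℝ E
  set f : ℝ → ℝ := fun y => min (y ^ (-p₁)) (y ^ (-p₂))
  have hf : Measurable fun y : ℝ => y ^ (n - 1) • f y := by fun_prop
  have hbound : ∀ y : ℝ, 0 < y → ∀ p, f y ≤ y ^ (-p) →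
      ‖y ^ (n - 1) • f y‖ ≤ y ^ ((n : ℝ) - 1 - p) := fun y hy p hp => by
    have hf0 : 0 ≤ f y := le_min (by positivity) (by positivity)
    have hn : (n : ℝ) - 1 = ((n - 1 : ℕ) : ℝ) := by
      rw [Nat.cast_sub Module.finrank_pos, Nat.cast_one]
    rw [smul_eq_mul, Real.norm_of_nonneg (by positivity), sub_eq_add_neg _ p,
      Real.rpow_add hy, hn, Real.rpow_natCast]
    gcongr
  rw [integrable_fun_norm_addHaar μ (f := f), ← Ioc_union_Ioi_eq_Ioi zero_le_one]
  refine IntegrableOn.union ?_ ?_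
  · refine Integrable.mono' (g := fun y => y ^ ((n : ℝ) - 1 - p₁)) ?_
      hf.aestronglyMeasurable ?_
    · exact (intervalIntegrable_iff_integrableOn_Ioc_of_le zero_le_one).1
        (intervalIntegral.intervalIntegrable_rpow' (by linarith))
    · filter_upwards [ae_restrict_mem measurableSet_Ioc] with y hy
      exact hbound y hy.1 p₁ (min_le_left _ _)
  · refine Integrable.mono' (g := fun y => y ^ ((n : ℝ) - 1 - p₂)) ?_
      hf.aestronglyMeasurable ?_
    · exact integrableOn_Ioi_rpow_of_lt (by linarith) zero_lt_one
    · filter_upwards [ae_restrict_mem measurableSet_Ioi] with y hy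
      exact hbound y (zero_lt_one.trans hy) p₂ (min_le_right _ _)

lemma setLIntegral_Ioi_ofReal_rpow_add_sub_le {β ε v W : ℝ} (hβ0 : 0 ≤ β) (hβ1 : β ≤ 1)
    (hε : 0 ≤ ε) {a b : ℝ → ℝ} (ha0 : ∀ r, 0 ≤ a r) (hb0 : ∀ r, 0 ≤ b r)
    (hb_supp : ∀ r, r ∉ Icc 0 v → b r = 0) (ha : ∀ r ∈ Icc 0 v, a r ≤ ε)
    (hb : ∀ r, b r ^ β ≤ W) :
    ∫⁻ r in Ioi 0, ENNReal.ofReal ((a r + b r) ^ (1 + β) - a r ^ (1 + β) - b r ^ (1 + β))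
      ≤ ENNReal.ofReal ((1 + β) * ε * v * W) := by
  have hW : 0 ≤ W := (Real.rpow_nonneg (hb0 0) β).trans (hb 0)
  have hpoint : ∀ r, ENNReal.ofReal ((a r + b r) ^ (1 + β) - a r ^ (1 + β) - b r ^ (1 + β))
      ≤ (Icc 0 v).indicator (fun _ => ENNReal.ofReal ((1 + β) * ε * W)) r := fun r => by
    by_cases hr : r ∈ Icc 0 v
    · rw [indicator_of_mem hr]
      refine ENNReal.ofReal_le_ofReal
        ((add_rpow_one_add_sub_rpow_sub_rpow_le (ha0 r) (hb0 r) hβ0 hβ1).trans ?_)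
      have := Real.rpow_nonneg (hb0 r) β
      gcongr
      exacts [ha r hr, hb r]
    · rw [indicator_of_notMem hr, hb_supp r hr, add_zero, Real.zero_rpow (by linarith),
        sub_self, zero_sub, ENNReal.ofReal_eq_zero.2 (by simp)]
  calc ∫⁻ r in Ioi 0, ENNReal.ofReal ((a r + b r) ^ (1 + β) - a r ^ (1 + β) - b r ^ (1 + β))
      ≤ ∫⁻ r, (Icc 0 v).indicator (fun _ => ENNReal.ofReal ((1 + β) * ε * W)) r :=
        (setLIntegral_le_lintegral _ _).trans (lintegral_mono hpoint)
    _ = ENNReal.ofReal ((1 + β) * ε * v * W) := by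
        rw [lintegral_indicator_const measurableSet_Icc, Real.volume_Icc, sub_zero,
          ← ENNReal.ofReal_mul (by positivity), mul_right_comm]

lemma lintegral_setLIntegral_Ioi_ofReal_rpow_add_sub_le {E : Type*} [MeasurableSpace E]
    {μ : Measure E} {β ε v : ℝ} (hβ0 : 0 ≤ β) (hβ1 : β ≤ 1) (hε : 0 ≤ ε) (hv : 0 ≤ v)
    {a b : E → ℝ → ℝ} {w : E → ℝ} (hw : Integrable w μ)
    (ha0 : ∀ x r, 0 ≤ a x r) (hb0 : ∀ x r, 0 ≤ b x r)
    (hb_supp : ∀ x r, r ∉ Icc 0 v → b x r = 0) (ha : ∀ x, ∀ r ∈ Icc 0 v, a x r ≤ ε)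
    (hb : ∀ᵐ x ∂μ, ∀ r, b x r ^ β ≤ w x) :
    ∫⁻ x, (∫⁻ r in Ioi 0,
        ENNReal.ofReal ((a x r + b x r) ^ (1 + β) - a x r ^ (1 + β) - b x r ^ (1 + β))) ∂μ
      ≤ ENNReal.ofReal ((1 + β) * ε * v * ∫ x, w x ∂μ) := by
  calc ∫⁻ x, (∫⁻ r in Ioi 0,
        ENNReal.ofReal ((a x r + b x r) ^ (1 + β) - a x r ^ (1 + β) - b x r ^ (1 + β))) ∂μ
      ≤ ∫⁻ x, ENNReal.ofReal ((1 + β) * ε * v * w x) ∂μ :=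
        lintegral_mono_ae <| hb.mono fun x hx => setLIntegral_Ioi_ofReal_rpow_add_sub_le
          hβ0 hβ1 hε (ha0 x) (hb0 x) (hb_supp x) (ha x) hx
    _ = ENNReal.ofReal ((1 + β) * ε * v * ∫ x, w x ∂μ) := by
        rw [← integral_const_mul, ofReal_integral_eq_lintegral_ofReal (hw.const_mul _)]
        filter_upwards [hb] with x hx
        have := (Real.rpow_nonneg (hb0 x 0) β).trans (hx 0)
        positivity

section KernelBounds

variable {d : ℕ} {α c₂ : ℝ} {q : EuclideanSpace ℝ (Fin d) → ℝ}

lemma pker_nonneg (hq0 : ∀ y, 0 ≤ q y) {τ : ℝ} (hτ : 0 ≤ τ) (x : EuclideanSpace ℝ (Fin d)) :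
    0 ≤ pker d α q τ x :=
  mul_nonneg (Real.rpow_nonneg hτ _) (hq0 _)

lemma pker_le_mul_rpow (hc₂ : 0 ≤ c₂) (hq2 : ∀ y, q y ≤ c₂ / (1 + ‖y‖ ^ ((d : ℝ) + α)))
    {τ : ℝ} (hτ : 0 ≤ τ) (x : EuclideanSpace ℝ (Fin d)) :
    pker d α q τ x ≤ c₂ * τ ^ (-(d : ℝ) / α) := by
  rw [pker, mul_comm]
  gcongr
  exact (hq2 _).trans (div_le_self hc₂ (le_add_of_nonneg_right (by positivity)))

lemma pker_le_mul_mul_norm_rpow (hα : 0 < α) (hc₂ : 0 ≤ c₂)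
    (hq2 : ∀ y, q y ≤ c₂ / (1 + ‖y‖ ^ ((d : ℝ) + α)))
    {τ : ℝ} (hτ : 0 < τ) {x : EuclideanSpace ℝ (Fin d)} (hx : x ≠ 0) :
    pker d α q τ x ≤ c₂ * τ * ‖x‖ ^ (-((d : ℝ) + α)) := by
  have hx' : 0 < ‖x‖ := norm_pos_iff.2 hx
  have hnorm : ‖(τ ^ (-(1 : ℝ) / α)) • x‖ ^ ((d : ℝ) + α)
      = τ ^ (-(1 : ℝ) / α * ((d : ℝ) + α)) * ‖x‖ ^ ((d : ℝ) + α) := by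
    rw [norm_smul, Real.norm_of_nonneg (by positivity),
      Real.mul_rpow (by positivity) hx'.le, ← Real.rpow_mul hτ.le]
  have hexp : -(d : ℝ) / α = 1 + -(1 : ℝ) / α * ((d : ℝ) + α) := by field_simp; ring
  calc pker d α q τ x
      ≤ τ ^ (-(d : ℝ) / α) * (c₂ / ‖(τ ^ (-(1 : ℝ) / α)) • x‖ ^ ((d : ℝ) + α)) := by
        rw [pker]
        gcongr
        refine (hq2 _).trans (div_le_div_of_nonneg_left hc₂ ?_ (by linarith))
        rw [hnorm]
        positivity
    _ = c₂ * τ * ‖x‖ ^ (-((d : ℝ) + α)) := by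
        rw [hnorm, Real.rpow_neg hx'.le, hexp, Real.rpow_add hτ, Real.rpow_one]
        field_simp

lemma pker_le_mul_norm_rpow (hα : 0 < α) (hc₂ : 0 ≤ c₂)
    (hq2 : ∀ y, q y ≤ c₂ / (1 + ‖y‖ ^ ((d : ℝ) + α)))
    {τ : ℝ} (hτ : 0 < τ) {x : EuclideanSpace ℝ (Fin d)} (hx : x ≠ 0) :
    pker d α q τ x ≤ c₂ * ‖x‖ ^ (-(d : ℝ)) := by
  have hx' : 0 < ‖x‖ := norm_pos_iff.2 hx
  rcases le_or_gt τ (‖x‖ ^ α) with h | h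
  · calc pker d α q τ x ≤ c₂ * τ * ‖x‖ ^ (-((d : ℝ) + α)) :=
          pker_le_mul_mul_norm_rpow hα hc₂ hq2 hτ hx
      _ ≤ c₂ * ‖x‖ ^ α * ‖x‖ ^ (-((d : ℝ) + α)) := by gcongr
      _ = c₂ * ‖x‖ ^ (-(d : ℝ)) := by
          rw [mul_assoc, ← Real.rpow_add hx']
          ring_nf
  · calc pker d α q τ x ≤ c₂ * τ ^ (-(d : ℝ) / α) := pker_le_mul_rpow hc₂ hq2 hτ.le x
      _ ≤ c₂ * (‖x‖ ^ α) ^ (-(d : ℝ) / α) := by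
          refine mul_le_mul_of_nonneg_left (Real.rpow_le_rpow_of_nonpos (by positivity) h.le ?_) hc₂
          exact div_nonpos_of_nonpos_of_nonneg (neg_nonpos.2 d.cast_nonneg) hα.le
      _ = c₂ * ‖x‖ ^ (-(d : ℝ)) := by
          rw [← Real.rpow_mul hx'.le, mul_div_cancel₀ _ hα.ne']

lemma pker_le_mul_min (hα : 0 < α) (hc₂ : 0 ≤ c₂)
    (hq2 : ∀ y, q y ≤ c₂ / (1 + ‖y‖ ^ ((d : ℝ) + α)))
    {τ : ℝ} (hτ : 0 < τ) {x : EuclideanSpace ℝ (Fin d)} (hx : x ≠ 0) :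
    pker d α q τ x ≤ c₂ * max 1 τ * min (‖x‖ ^ (-(d : ℝ))) (‖x‖ ^ (-((d : ℝ) + α))) := by
  rw [mul_min_of_nonneg _ _ (by positivity)]
  refine le_min ?_ ?_
  · calc pker d α q τ x ≤ c₂ * ‖x‖ ^ (-(d : ℝ)) := pker_le_mul_norm_rpow hα hc₂ hq2 hτ hx
      _ ≤ c₂ * max 1 τ * ‖x‖ ^ (-(d : ℝ)) := by
          rw [mul_right_comm]
          exact le_mul_of_one_le_right (by positivity) (le_max_left _ _)
  · calc pker d α q τ x ≤ c₂ * τ * ‖x‖ ^ (-((d : ℝ) + α)) :=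
          pker_le_mul_mul_norm_rpow hα hc₂ hq2 hτ hx
      _ ≤ c₂ * max 1 τ * ‖x‖ ^ (-((d : ℝ) + α)) := by gcongr; exact le_max_right _ _

end KernelBounds

/-- In the paper's notation `R = incrementKernel d α q u v` and
`U_T = z • incrementKernel d α q (s + T) (t + T)`. -/
noncomputable def incrementKernel (d : ℕ) (α : ℝ) (q : EuclideanSpace ℝ (Fin d) → ℝ)
    (u v : ℝ) (x : EuclideanSpace ℝ (Fin d)) (r : ℝ) : ℝ :=
  (Icc 0 u).indicator (fun _ => ∫ r' in u..v, pker d α q (r' - r) x) r +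
    (Ioc u v).indicator (fun _ => ∫ r' in r..v, pker d α q (r' - r) x) r

section IncrementKernel

variable {d : ℕ} {α c₂ u v : ℝ} {q : EuclideanSpace ℝ (Fin d) → ℝ}

lemma incrementKernel_eq_indicator (hu : 0 ≤ u) (huv : u ≤ v) (x : EuclideanSpace ℝ (Fin d))
    (r : ℝ) : incrementKernel d α q u v x r =
      (Icc 0 v).indicator (fun r => ∫ r' in max u r..v, pker d α q (r' - r) x) r := by
  rw [incrementKernel]
  rcases le_or_gt r u with hru | hur
  · rw [indicator_of_notMem (s := Ioc u v) fun h => (not_lt.2 hru) h.1, add_zero]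
    by_cases h0 : 0 ≤ r
    · rw [indicator_of_mem (show r ∈ Icc 0 u from ⟨h0, hru⟩),
        indicator_of_mem (show r ∈ Icc 0 v from ⟨h0, hru.trans huv⟩), max_eq_left hru]
    · rw [indicator_of_notMem fun h => h0 h.1, indicator_of_notMem fun h => h0 h.1]
  · rw [indicator_of_notMem (s := Icc 0 u) fun h => (not_lt.2 h.2) hur, zero_add]
    by_cases hrv : r ≤ v
    · rw [indicator_of_mem (show r ∈ Ioc u v from ⟨hur, hrv⟩),
        indicator_of_mem (show r ∈ Icc 0 v from ⟨hu.trans hur.le, hrv⟩), max_eq_right hur.le]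
    · rw [indicator_of_notMem fun h => hrv h.2, indicator_of_notMem fun h => hrv h.2]

lemma integral_pker_sub_le (hq0 : ∀ y, 0 ≤ q y) {a b r C : ℝ} (hab : a ≤ b) (hra : r ≤ a)
    {x : EuclideanSpace ℝ (Fin d)} (hC : ∀ τ ∈ Ioc (a - r) (b - r), pker d α q τ x ≤ C) :
    ∫ r' in a..b, pker d α q (r' - r) x ≤ C * (b - a) := by
  have h := intervalIntegral.norm_integral_le_of_norm_le_const
    (f := fun r' => pker d α q (r' - r) x) (C := C) fun y hy => by
      rw [uIoc_of_le hab] at hy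
      rw [Real.norm_of_nonneg (pker_nonneg hq0 (by linarith [hy.1]) x)]
      exact hC _ ⟨by linarith [hy.1], by linarith [hy.2]⟩
  rw [abs_of_nonneg (sub_nonneg.2 hab)] at h
  exact (le_abs_self _).trans h

lemma incrementKernel_nonneg (hq0 : ∀ y, 0 ≤ q y) (hu : 0 ≤ u) (huv : u ≤ v)
    (x : EuclideanSpace ℝ (Fin d)) (r : ℝ) : 0 ≤ incrementKernel d α q u v x r := by
  rw [incrementKernel_eq_indicator hu huv]
  refine indicator_nonneg (fun r hr => intervalIntegral.integral_nonneg ?_ fun y hy => ?_) r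
  · exact max_le huv hr.2
  · exact pker_nonneg hq0 (by linarith [hy.1, le_max_right u r]) x

lemma incrementKernel_eq_zero (hu : 0 ≤ u) (huv : u ≤ v) (x : EuclideanSpace ℝ (Fin d))
    {r : ℝ} (hr : r ∉ Icc 0 v) : incrementKernel d α q u v x r = 0 := by
  rw [incrementKernel_eq_indicator hu huv, indicator_of_notMem hr]

lemma incrementKernel_le_of_le_sub (hα : 0 ≤ α) (hq0 : ∀ y, 0 ≤ q y) (hc₂ : 0 ≤ c₂)
    (hq2 : ∀ y, q y ≤ c₂ / (1 + ‖y‖ ^ ((d : ℝ) + α))) (hu : 0 ≤ u) (huv : u ≤ v)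
    (x : EuclideanSpace ℝ (Fin d)) {r L : ℝ} (hL : 0 < L) (hr : r ≤ u - L) :
    incrementKernel d α q u v x r ≤ c₂ * L ^ (-(d : ℝ) / α) * (v - u) := by
  have hbound : 0 ≤ c₂ * L ^ (-(d : ℝ) / α) * (v - u) := by
    have := sub_nonneg.2 huv
    positivity
  rw [incrementKernel_eq_indicator hu huv]
  by_cases hrv : r ∈ Icc 0 v
  · rw [indicator_of_mem hrv, max_eq_left (by linarith)]
    refine integral_pker_sub_le hq0 huv (by linarith) fun τ hτ => ?_
    refine (pker_le_mul_rpow hc₂ hq2 (by linarith [hτ.1]) x).trans ?_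
    refine mul_le_mul_of_nonneg_left (Real.rpow_le_rpow_of_nonpos hL ?_ ?_) hc₂
    · linarith [hτ.1]
    · exact div_nonpos_of_nonpos_of_nonneg (neg_nonpos.2 d.cast_nonneg) hα
  · rwa [indicator_of_notMem hrv]

lemma incrementKernel_le_mul_min (hα : 0 < α) (hq0 : ∀ y, 0 ≤ q y) (hc₂ : 0 ≤ c₂)
    (hq2 : ∀ y, q y ≤ c₂ / (1 + ‖y‖ ^ ((d : ℝ) + α))) (hu : 0 ≤ u) (huv : u ≤ v)
    {x : EuclideanSpace ℝ (Fin d)} (hx : x ≠ 0) (r : ℝ) :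
    incrementKernel d α q u v x r ≤
      c₂ * max 1 v * v * min (‖x‖ ^ (-(d : ℝ))) (‖x‖ ^ (-((d : ℝ) + α))) := by
  have hv : 0 ≤ v := hu.trans huv
  rw [incrementKernel_eq_indicator hu huv]
  by_cases hrv : r ∈ Icc 0 v
  · rw [indicator_of_mem hrv, mul_right_comm]
    calc ∫ r' in max u r..v, pker d α q (r' - r) x
        ≤ c₂ * max 1 v * min (‖x‖ ^ (-(d : ℝ))) (‖x‖ ^ (-((d : ℝ) + α))) * (v - max u r) := by
          refine integral_pker_sub_le hq0 (max_le huv hrv.2) (le_max_right u r)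
            fun τ hτ => ?_
          have hτ0 : 0 < τ := by linarith [hτ.1, le_max_right u r]
          refine (pker_le_mul_min hα hc₂ hq2 hτ0 hx).trans ?_
          gcongr
          linarith [hτ.2, hrv.1]
      _ ≤ c₂ * max 1 v * min (‖x‖ ^ (-(d : ℝ))) (‖x‖ ^ (-((d : ℝ) + α))) * v := by
          gcongr
          linarith [le_max_right u r, hrv.1]
  · rw [indicator_of_notMem hrv]
    positivity

lemma incrementKernel_rpow_le {β : ℝ} (hα : 0 < α) (hq0 : ∀ y, 0 ≤ q y) (hc₂ : 0 ≤ c₂)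
    (hq2 : ∀ y, q y ≤ c₂ / (1 + ‖y‖ ^ ((d : ℝ) + α))) (hu : 0 ≤ u) (huv : u ≤ v) (hβ : 0 ≤ β)
    {x : EuclideanSpace ℝ (Fin d)} (hx : x ≠ 0) (r : ℝ) :
    incrementKernel d α q u v x r ^ β ≤
      (c₂ * max 1 v * v) ^ β * min (‖x‖ ^ (-((d : ℝ) * β))) (‖x‖ ^ (-(((d : ℝ) + α) * β))) := by
  have hv : 0 ≤ v := hu.trans huv
  calc incrementKernel d α q u v x r ^ β
      ≤ (c₂ * max 1 v * v * min (‖x‖ ^ (-(d : ℝ))) (‖x‖ ^ (-((d : ℝ) + α)))) ^ β :=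
        Real.rpow_le_rpow (incrementKernel_nonneg hq0 hu huv x r)
          (incrementKernel_le_mul_min hα hq0 hc₂ hq2 hu huv hx r) hβ
    _ = _ := by
        rw [Real.mul_rpow (by positivity) (by positivity), Real.min_rpow (by positivity)
          (by positivity) hβ, ← Real.rpow_mul (norm_nonneg x), ← Real.rpow_mul (norm_nonneg x),
          neg_mul, neg_mul]

end IncrementKernel

theorem stmt8_general (d : ℕ) (hd : 1 ≤ d) (α β : ℝ) (hα0 : 0 < α)
    (hβ0 : 0 < β) (hβ1 : β < 1)
    (hreg : (d : ℝ) / (d + α) < β)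
    (q : EuclideanSpace ℝ (Fin d) → ℝ) (hq0 : ∀ x, 0 ≤ q x)
    (c₂ : ℝ) (hc₂ : 0 < c₂) (hq2 : ∀ x, q x ≤ c₂ / (1 + ‖x‖ ^ ((d : ℝ) + α)))
    (u v s t z : ℝ) (hu : 0 ≤ u) (huv : u < v) (hvs : v < s) (hst : s < t) (hz : 0 < z)
    (U : ℝ → EuclideanSpace ℝ (Fin d) → ℝ → ℝ)
    (hU : ∀ T x r, U T x r = z *
      ((Set.Icc (0:ℝ) (s + T)).indicator
          (fun _ => ∫ r' in (s + T)..(t + T), pker d α q (r' - r) x) r +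
        (Set.Ioc (s + T) (t + T)).indicator
          (fun _ => ∫ r' in r..(t + T), pker d α q (r' - r) x) r))
    (R : EuclideanSpace ℝ (Fin d) → ℝ → ℝ)
    (hR : ∀ x r, R x r =
      (Set.Icc (0:ℝ) u).indicator (fun _ => ∫ r' in u..v, pker d α q (r' - r) x) r +
        (Set.Ioc u v).indicator (fun _ => ∫ r' in r..v, pker d α q (r' - r) x) r) :
    ∃ C : ℝ, 0 < C ∧ ∀ T : ℝ, 1 ≤ T →
      ∫⁻ x : EuclideanSpace ℝ (Fin d), ∫⁻ r in Set.Ioi (0:ℝ),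
          ENNReal.ofReal
            ((U T x r + R x r) ^ (1 + β) - (U T x r) ^ (1 + β) - (R x r) ^ (1 + β))
        ≤ ENNReal.ofReal (C * T ^ (-(d : ℝ) / α)) := by
  have : Nonempty (Fin d) := ⟨⟨0, hd⟩⟩
  have hv : 0 ≤ v := hu.trans huv.le
  have hts : 0 ≤ t - s := sub_nonneg.2 hst.le
  have hU' : ∀ T x r, U T x r = z * incrementKernel d α q (s + T) (t + T) x r := hU
  have hR' : ∀ x r, R x r = incrementKernel d α q u v x r := hR
  set w : EuclideanSpace ℝ (Fin d) → ℝ := fun x =>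
    (c₂ * max 1 v * v) ^ β * min (‖x‖ ^ (-((d : ℝ) * β))) (‖x‖ ^ (-(((d : ℝ) + α) * β)))
  have hw : Integrable w := by
    have hd' : (0 : ℝ) < d := by exact_mod_cast hd
    have := (div_lt_iff₀ (by positivity)).1 hreg
    refine (integrable_min_norm_rpow_neg volume ?_ ?_).const_mul _ <;>
      rw [finrank_euclideanSpace_fin] <;> nlinarith
  have hR_rpow : ∀ᵐ x, ∀ r, incrementKernel d α q u v x r ^ β ≤ w x := by
    filter_upwards [compl_mem_ae_iff.2 (measure_singleton 0)] with x hx r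
    exact incrementKernel_rpow_le hα0 hq0 hc₂.le hq2 hu huv.le hβ0.le hx r
  set X := (1 + β) * (z * (c₂ * (t - s))) * v * ∫ x, w x
  have hX : 0 ≤ X := by
    have : 0 ≤ ∫ x, w x := integral_nonneg fun x => by positivity
    positivity
  refine ⟨X + 1, by linarith, fun T hT => ?_⟩
  have hT0 : 0 < T := by linarith
  have hU_le : ∀ x, ∀ r ∈ Icc 0 v, z * incrementKernel d α q (s + T) (t + T) x r
      ≤ z * (c₂ * T ^ (-(d : ℝ) / α) * (t - s)) := fun x r hr =>
    mul_le_mul_of_nonneg_left ((incrementKernel_le_of_le_sub hα0.le hq0 hc₂.le hq2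
      (by linarith) (by linarith) x hT0 (by linarith [hr.2])).trans_eq (by ring)) hz.le
  simp only [hU', hR']
  refine (lintegral_setLIntegral_Ioi_ofReal_rpow_add_sub_le hβ0.le hβ1.le (by positivity) hv hw
    (fun x r => mul_nonneg hz.le (incrementKernel_nonneg hq0 (by linarith) (by linarith) x r))
    (incrementKernel_nonneg hq0 hu huv.le) (fun x r hr => incrementKernel_eq_zero hu huv.le x hr)
    hU_le hR_rpow).trans (ENNReal.ofReal_le_ofReal ?_)
  calc (1 + β) * (z * (c₂ * T ^ (-(d : ℝ) / α) * (t - s))) * v * ∫ x, w x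
      = X * T ^ (-(d : ℝ) / α) := by ring
    _ ≤ (X + 1) * T ^ (-(d : ℝ) / α) := by gcongr; linarith

/-- Upper bound (4.3) for `D_T^+` in the regime `α < 2`, `β > d/(d+α)`:
`∫_{ℝ^d}∫_0^∞ ((U_T+R)^{1+β} − U_T^{1+β} − R^{1+β}) dr dx ≤ C T^{−d/α}` for all `T ≥ 1`. -/
theorem stmt8 (d : ℕ) (hd : 1 ≤ d) (α β : ℝ) (hα0 : 0 < α) (hα2 : α < 2)
    (hβ0 : 0 < β) (hβ1 : β < 1)
    (hdim1 : α / β < d) (hdim2 : (d : ℝ) < α * (1 + β) / β)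
    (hreg : (d : ℝ) / (d + α) < β)
    (q : EuclideanSpace ℝ (Fin d) → ℝ) (hqm : Measurable q) (hq0 : ∀ x, 0 ≤ q x)
    (c₂ : ℝ) (hc₂ : 0 < c₂) (hq2 : ∀ x, q x ≤ c₂ / (1 + ‖x‖ ^ ((d : ℝ) + α)))
    (u v s t z : ℝ) (hu : 0 ≤ u) (huv : u < v) (hvs : v < s) (hst : s < t) (hz : 0 < z)
    (U : ℝ → EuclideanSpace ℝ (Fin d) → ℝ → ℝ)
    (hU : ∀ T x r, U T x r = z *
      ((Set.Icc (0:ℝ) (s + T)).indicator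
          (fun _ => ∫ r' in (s + T)..(t + T), pker d α q (r' - r) x) r +
        (Set.Ioc (s + T) (t + T)).indicator
          (fun _ => ∫ r' in r..(t + T), pker d α q (r' - r) x) r))
    (R : EuclideanSpace ℝ (Fin d) → ℝ → ℝ)
    (hR : ∀ x r, R x r =
      (Set.Icc (0:ℝ) u).indicator (fun _ => ∫ r' in u..v, pker d α q (r' - r) x) r +
        (Set.Ioc u v).indicator (fun _ => ∫ r' in r..v, pker d α q (r' - r) x) r) :
    ∃ C : ℝ, 0 < C ∧ ∀ T : ℝ, 1 ≤ T →
      ∫⁻ x : EuclideanSpace ℝ (Fin d), ∫⁻ r in Set.Ioi (0:ℝ),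
          ENNReal.ofReal
            ((U T x r + R x r) ^ (1 + β) - (U T x r) ^ (1 + β) - (R x r) ^ (1 + β))
        ≤ ENNReal.ofReal (C * T ^ (-(d : ℝ) / α)) :=
  stmt8_general d hd α β hα0 hβ0 hβ1 hreg q hq0 c₂ hc₂ hq2 u v s t z hu huv hvs hst hz U hU R hR
end

section
/- Let d ≥ 1 be an integer and 0 < β ≤ 1. Let f ∈ L^{1+β}(ℝ^d), g₁ ∈ L^{(1+β)/β}(ℝ^d), g₂ ∈ L¹(ℝ^d) be nonnegative measurable functions. Then ‖ f * ( g₁ · (f * g₂) ) ‖_{L^{1+β}(ℝ^d)} ≤ ‖f‖_{L^{1+β}}² · ‖g₁‖_{L^{(1+β)/β}} · ‖g₂‖_{L¹}. -/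
/-!
Young's inequality for the exponents `(p, 1, p)`, `‖f * h‖_p ≤ ‖f‖_p ‖h‖_1`, is applied twice,
with Hölder's inequality `‖g₁ v‖_1 ≤ ‖g₁‖_q ‖v‖_p` (`q = p / (p - 1)`) in between:
`‖f * (g₁ (f * g₂))‖_p ≤ ‖f‖_p ‖g₁‖_q ‖f * g₂‖_p ≤ ‖f‖_p² ‖g₁‖_q ‖g₂‖_1`.
Young's inequality itself comes from Hölder's inequality for the measure `ψ(y) dy`, which gives
`(∫ φ(x - y) ψ(y) dy)^p ≤ (∫ φ(x - y)^p ψ(y) dy) (∫ ψ)^(p - 1)`, integrated in `x` by Tonelli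
and translation invariance.
-/

open MeasureTheory

/-- Convolution of two real functions on `ℝ^d` (w.r.t. Lebesgue measure). -/
noncomputable def conv (d : ℕ) (f g : EuclideanSpace ℝ (Fin d) → ℝ)
    (x : EuclideanSpace ℝ (Fin d)) : ℝ :=
  ∫ y, f (x - y) * g y

open ENNReal

section Young

variable {α : Type*} [MeasurableSpace α] {μ : Measure α}

/-- Hölder's inequality for `φ` and `1` with respect to the measure `ψ μ`. -/
theorem lintegral_mul_rpow_le_lintegral_rpow_mul {p : ℝ} (hp : 1 ≤ p) {φ ψ : α → ℝ≥0∞}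
    (hφ : Measurable φ) (hψ : Measurable ψ) :
    (∫⁻ a, φ a * ψ a ∂μ) ^ p ≤ (∫⁻ a, φ a ^ p * ψ a ∂μ) * (∫⁻ a, ψ a ∂μ) ^ (p - 1) := by
  rcases hp.eq_or_lt with rfl | hp
  · simp
  set q := p.conjExponent
  have hpq : p.HolderConjugate q := .conjExponent hp
  have hwd : ∀ g : α → ℝ≥0∞, Measurable g → ∫⁻ a, g a ∂μ.withDensity ψ = ∫⁻ a, g a * ψ a ∂μ :=
    fun g hg => by
      rw [lintegral_withDensity_eq_lintegral_mul μ hψ hg]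
      simp only [Pi.mul_apply, mul_comm]
  have holder := lintegral_mul_le_Lp_mul_Lq (μ.withDensity ψ) hpq hφ.aemeasurable
    (aemeasurable_const (b := (1 : ℝ≥0∞)))
  simp only [Pi.mul_apply, mul_one, one_rpow] at holder
  rw [hwd φ hφ, hwd _ (hφ.pow_const p), hwd _ measurable_const] at holder
  simp only [one_mul] at holder
  calc (∫⁻ a, φ a * ψ a ∂μ) ^ p
      ≤ ((∫⁻ a, φ a ^ p * ψ a ∂μ) ^ (1 / p) * (∫⁻ a, ψ a ∂μ) ^ (1 / q)) ^ p := by gcongr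
    _ = (∫⁻ a, φ a ^ p * ψ a ∂μ) * (∫⁻ a, ψ a ∂μ) ^ (p - 1) := by
      rw [mul_rpow_of_nonneg _ _ hpq.nonneg, ← rpow_mul, ← rpow_mul, one_div_mul_cancel hpq.ne_zero,
        rpow_one, one_div_mul_eq_div, hpq.div_conj_eq_sub_one]

variable {G : Type*} [MeasurableSpace G] [AddGroup G] [MeasurableAdd G] [MeasurableSub₂ G]
  {μ : Measure G} [SFinite μ] [μ.IsAddRightInvariant]

theorem lintegral_lintegral_sub_mul {φ ψ : G → ℝ≥0∞} (hφ : Measurable φ) (hψ : Measurable ψ) :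
    ∫⁻ x, ∫⁻ y, φ (x - y) * ψ y ∂μ ∂μ = (∫⁻ x, φ x ∂μ) * ∫⁻ y, ψ y ∂μ := by
  rw [lintegral_lintegral_swap ((hφ.comp measurable_sub).mul (hψ.comp measurable_snd)).aemeasurable,
    ← lintegral_const_mul'' _ hψ.aemeasurable]
  refine lintegral_congr fun y => ?_
  have hφy : Measurable fun x => φ (x - y) := hφ.comp (measurable_sub_const y)
  rw [lintegral_mul_const'' _ hφy.aemeasurable, lintegral_sub_right_eq_self]

/-- Young's convolution inequality for the exponents `(p, 1, p)`, raised to the power `p`. -/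
theorem lintegral_conv_rpow_le {p : ℝ} (hp : 1 ≤ p) {φ ψ : G → ℝ≥0∞}
    (hφ : Measurable φ) (hψ : Measurable ψ) :
    ∫⁻ x, (∫⁻ y, φ (x - y) * ψ y ∂μ) ^ p ∂μ ≤ (∫⁻ x, φ x ^ p ∂μ) * (∫⁻ y, ψ y ∂μ) ^ p := by
  have hφp : Measurable fun z => φ z ^ p := hφ.pow_const p
  have hinner : Measurable fun x => ∫⁻ y, φ (x - y) ^ p * ψ y ∂μ :=
    Measurable.lintegral_prod_right' (f := fun z : G × G => φ (z.1 - z.2) ^ p * ψ z.2)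
      ((hφp.comp measurable_sub).mul (hψ.comp measurable_snd))
  calc ∫⁻ x, (∫⁻ y, φ (x - y) * ψ y ∂μ) ^ p ∂μ
      ≤ ∫⁻ x, (∫⁻ y, φ (x - y) ^ p * ψ y ∂μ) * (∫⁻ y, ψ y ∂μ) ^ (p - 1) ∂μ :=
        lintegral_mono fun x => lintegral_mul_rpow_le_lintegral_rpow_mul hp
          (hφ.comp (measurable_const.sub measurable_id)) hψ
    _ = (∫⁻ x, φ x ^ p ∂μ) * ((∫⁻ y, ψ y ∂μ) * (∫⁻ y, ψ y ∂μ) ^ (p - 1)) := by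
      rw [lintegral_mul_const'' _ hinner.aemeasurable, lintegral_lintegral_sub_mul hφp hψ,
        mul_assoc]
    _ = (∫⁻ x, φ x ^ p ∂μ) * (∫⁻ y, ψ y ∂μ) ^ p := by
      have hpow := rpow_add_of_nonneg (x := ∫⁻ y, ψ y ∂μ) 1 (p - 1) zero_le_one (by linarith)
      rw [rpow_one, add_sub_cancel] at hpow
      rw [hpow]

end Young

section Conv

variable {d : ℕ} {u w : EuclideanSpace ℝ (Fin d) → ℝ}

theorem measurable_conv (hu : Measurable u) (hw : Measurable w) : Measurable (conv d u w) :=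
  ((hu.comp measurable_sub).mul (hw.comp measurable_snd)).stronglyMeasurable
    |>.integral_prod_right' (f := fun z => u (z.1 - z.2) * w z.2) |>.measurable

theorem enorm_conv_le (x : EuclideanSpace ℝ (Fin d)) :
    ‖conv d u w x‖ₑ ≤ ∫⁻ y, ‖u (x - y)‖ₑ * ‖w y‖ₑ := by
  simpa only [conv, enorm_mul] using enorm_integral_le_lintegral_enorm (fun y => u (x - y) * w y)

theorem eLpNorm_conv_le {p : ℝ} (hp : 1 ≤ p) (hu : Measurable u) (hw : Measurable w) :
    eLpNorm (conv d u w) (ENNReal.ofReal p) volume ≤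
      eLpNorm u (ENNReal.ofReal p) volume * eLpNorm w 1 volume := by
  have hp0 : 0 < p := by linarith
  rw [eLpNorm_eq_lintegral_rpow_enorm_toReal (by simpa using hp0) ofReal_ne_top,
    eLpNorm_eq_lintegral_rpow_enorm_toReal (by simpa using hp0) ofReal_ne_top,
    eLpNorm_one_eq_lintegral_enorm, toReal_ofReal hp0.le]
  calc (∫⁻ x, ‖conv d u w x‖ₑ ^ p) ^ (1 / p)
      ≤ (∫⁻ x, (∫⁻ y, ‖u (x - y)‖ₑ * ‖w y‖ₑ) ^ p) ^ (1 / p) := by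
        gcongr with x
        exact enorm_conv_le x
    _ ≤ ((∫⁻ x, ‖u x‖ₑ ^ p) * (∫⁻ y, ‖w y‖ₑ) ^ p) ^ (1 / p) := by
        gcongr
        exact lintegral_conv_rpow_le hp hu.enorm hw.enorm
    _ = (∫⁻ x, ‖u x‖ₑ ^ p) ^ (1 / p) * ∫⁻ y, ‖w y‖ₑ := by
        rw [mul_rpow_of_nonneg _ _ (by positivity), ← rpow_mul, mul_one_div_cancel hp0.ne',
          rpow_one]

end Conv

theorem stmt15_general (d : ℕ) (β : ℝ) (hβ0 : 0 < β)
    (f g₁ g₂ : EuclideanSpace ℝ (Fin d) → ℝ)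
    (hfm : Measurable f) (hg₁m : Measurable g₁) (hg₂m : Measurable g₂) :
    eLpNorm (conv d f (fun x => g₁ x * conv d f g₂ x)) (ENNReal.ofReal (1 + β)) volume ≤
      (eLpNorm f (ENNReal.ofReal (1 + β)) volume) ^ 2 *
        eLpNorm g₁ (ENNReal.ofReal ((1 + β) / β)) volume * eLpNorm g₂ 1 volume := by
  have hp : 1 ≤ 1 + β := by linarith
  have hqp : HolderConjugate (ENNReal.ofReal ((1 + β) / β)) (ENNReal.ofReal (1 + β)) :=
    Real.HolderConjugate.ennrealOfReal <| Real.holderConjugate_iff.2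
      ⟨by rw [lt_div_iff₀ hβ0]; linarith, by field_simp; ring⟩
  set p := ENNReal.ofReal (1 + β)
  set q := ENNReal.ofReal ((1 + β) / β)
  have hv := measurable_conv hfm hg₂m
  calc eLpNorm (conv d f (fun x => g₁ x * conv d f g₂ x)) p volume
      ≤ eLpNorm f p volume * eLpNorm (g₁ • conv d f g₂) 1 volume :=
        eLpNorm_conv_le hp hfm (hg₁m.mul hv)
    _ ≤ eLpNorm f p volume * (eLpNorm g₁ q volume * eLpNorm (conv d f g₂) p volume) := by
        gcongr
        exact eLpNorm_smul_le_mul_eLpNorm hv.aestronglyMeasurable hg₁m.aestronglyMeasurable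
    _ ≤ eLpNorm f p volume *
          (eLpNorm g₁ q volume * (eLpNorm f p volume * eLpNorm g₂ 1 volume)) := by
        gcongr
        exact eLpNorm_conv_le hp hfm hg₂m
    _ = eLpNorm f p volume ^ 2 * eLpNorm g₁ q volume * eLpNorm g₂ 1 volume := by ring

/-- The Young–Hölder bound for the term `J₁(T)`:
`‖f * (g₁ · (f * g₂))‖_{1+β} ≤ ‖f‖_{1+β}² ‖g₁‖_{(1+β)/β} ‖g₂‖₁`
for nonnegative `f ∈ L^{1+β}`, `g₁ ∈ L^{(1+β)/β}`, `g₂ ∈ L¹`. -/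
theorem stmt15 (d : ℕ) (hd : 1 ≤ d) (β : ℝ) (hβ0 : 0 < β) (hβ1 : β ≤ 1)
    (f g₁ g₂ : EuclideanSpace ℝ (Fin d) → ℝ)
    (hf0 : ∀ x, 0 ≤ f x) (hg₁0 : ∀ x, 0 ≤ g₁ x) (hg₂0 : ∀ x, 0 ≤ g₂ x)
    (hfm : Measurable f) (hg₁m : Measurable g₁) (hg₂m : Measurable g₂)
    (hf : MemLp f (ENNReal.ofReal (1 + β)) volume)
    (hg₁ : MemLp g₁ (ENNReal.ofReal ((1 + β) / β)) volume)
    (hg₂ : MemLp g₂ 1 volume) :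
    eLpNorm (conv d f (fun x => g₁ x * conv d f g₂ x)) (ENNReal.ofReal (1 + β)) volume ≤
      (eLpNorm f (ENNReal.ofReal (1 + β)) volume) ^ 2 *
        eLpNorm g₁ (ENNReal.ofReal ((1 + β) / β)) volume * eLpNorm g₂ 1 volume :=
  stmt15_general d β hβ0 f g₁ g₂ hfm hg₁m hg₂m
end
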